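/- arXiv:2003.07995 — 7 statements merged into one kernel-verified Lean document; each statement's English description precedes it below -/
import Mathlib

section
/- Let V be a finite-dimensional vector space over a field K and f : V → V a linear endomorphism. Consider the direct limit of the directed system indexed by ℕ in which every object is V and the transition map from stage i to stage j (i ≤ j) is f^{j−i}. Then this direct limit is linearly isomorphic to the quotient V ⧸ (⨆_n ker(f^n)) of V by the generalized 0-eigenspace of f, and under this isomorphism the canonical map from the 0-th copy of V to the direct limit corresponds to the quotient projection. -/
section Aux

variable {K V : Type} [Field K] [AddCommGroup V] [Module K V] [FiniteDimensional K V]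

omit [FiniteDimensional K V] in
private lemma ker_pow_mono (f : V →ₗ[K] V) : Monotone fun n : ℕ => LinearMap.ker (f ^ n) := by
  intro m n h x hx
  simp only [LinearMap.mem_ker] at hx ⊢
  rw [← pow_sub_mul_pow f h, Module.End.mul_apply, hx, map_zero]

omit [FiniteDimensional K V] in
private lemma mem_iSup_ker_iff (f : V →ₗ[K] V) (x : V) :
    x ∈ (⨆ n : ℕ, LinearMap.ker (f ^ n)) ↔ ∃ n : ℕ, (f ^ n) x = 0 := by
  rw [Submodule.mem_iSup_of_directed _ (ker_pow_mono f).directed_le]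
  simp [LinearMap.mem_ker]

end Aux

/-- Let `V` be a finite-dimensional vector space over a field `K` and
`f : V → V` a linear endomorphism. The direct limit of the directed system `V →f V →f ⋯`
(every object `V`, transition map from stage `i` to stage `j` given by `f^(j-i)`) is
linearly isomorphic to `V ⧸ (⨆ n, ker (f^n))`, and under this isomorphism the canonical
map from the `0`-th copy of `V` corresponds to the quotient projection. -/
theorem directLimit_iterates_iso_quotient_generalized_kernel
    (K V : Type) [Field K] [AddCommGroup V] [Module K V] [FiniteDimensional K V]
    (f : V →ₗ[K] V) :
    ∃ e : Module.DirectLimit (fun _ : ℕ => V) (fun i j (_ : i ≤ j) => f ^ (j - i)) ≃ₗ[K]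
        V ⧸ (⨆ n : ℕ, LinearMap.ker (f ^ n)),
      ∀ v : V,
        e (Module.DirectLimit.of K ℕ (fun _ : ℕ => V) (fun i j (_ : i ≤ j) => f ^ (j - i)) 0 v)
          = Submodule.mkQ (⨆ n : ℕ, LinearMap.ker (f ^ n)) v := by
  classical
  set S : Submodule K V := ⨆ n : ℕ, LinearMap.ker (f ^ n) with hS
  -- `f` maps `S` into `S`
  have hfS : S ≤ S.comap f := by
    intro x hx
    rcases (mem_iSup_ker_iff f x).1 hx with ⟨n, hn⟩
    refine Submodule.mem_comap.2 ((mem_iSup_ker_iff f _).2 ⟨n, ?_⟩)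
    rw [← Module.End.mul_apply, ← pow_succ, pow_succ', Module.End.mul_apply, hn, map_zero]
  -- the induced endomorphism of the quotient
  set fbar : (V ⧸ S) →ₗ[K] V ⧸ S := Submodule.mapQ S S f hfS with hfbar
  have key : ∀ x : V, fbar (S.mkQ x) = S.mkQ (f x) := fun x => by
    rw [Submodule.mkQ_apply, Submodule.mkQ_apply, hfbar, Submodule.mapQ_apply]
  have hinj : Function.Injective fbar := by
    rw [← LinearMap.ker_eq_bot, eq_bot_iff]
    intro y hy
    obtain ⟨x, rfl⟩ := S.mkQ_surjective y
    have : S.mkQ (f x) = 0 := by rw [← key]; exact hy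
    rcases (mem_iSup_ker_iff f (f x)).1 ((Submodule.Quotient.mk_eq_zero S).1 this) with ⟨n, hn⟩
    have hx : x ∈ S := (mem_iSup_ker_iff f x).2 ⟨n + 1, by
      rw [pow_succ, Module.End.mul_apply, hn]⟩
    simpa using (Submodule.Quotient.mk_eq_zero S).2 hx
  have hbij : Function.Bijective fbar :=
    ⟨hinj, (LinearMap.injective_iff_surjective).1 hinj⟩
  set B : (V ⧸ S) ≃ₗ[K] V ⧸ S := LinearEquiv.ofBijective fbar hbij with hB
  have hBapp : ∀ x : V, B (S.mkQ x) = S.mkQ (f x) := fun x => key x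
  have hmul : ∀ (a b : (V ⧸ S) ≃ₗ[K] V ⧸ S) (y : V ⧸ S), (a * b) y = a (b y) := fun _ _ _ => rfl
  -- powers
  have hpow : ∀ (k : ℕ) (x : V), S.mkQ ((f ^ k) x) = (B ^ (k : ℤ)) (S.mkQ x) := by
    intro k
    induction k with
    | zero => intro x; simp
    | succ k ih =>
      intro x
      have h1 : (f ^ (k + 1)) x = f ((f ^ k) x) := by
        rw [pow_succ', Module.End.mul_apply]
      rw [h1, ← hBapp, ih, ← hmul, ← zpow_one B, ← zpow_mul, one_mul, ← zpow_add]
      norm_num [add_comm]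
  set g : ∀ _ : ℕ, V →ₗ[K] V ⧸ S :=
    fun i => (B ^ (-(i : ℤ))).toLinearMap ∘ₗ S.mkQ with hg
  have hgapp : ∀ (i : ℕ) (x : V), g i x = (B ^ (-(i : ℤ))) (S.mkQ x) := fun _ _ => rfl
  have Hg : ∀ (i j : ℕ) (hij : i ≤ j) (x : V), g j ((f ^ (j - i)) x) = g i x := by
    intro i j hij x
    rw [hgapp, hgapp, hpow, ← hmul, ← zpow_add]
    congr 2
    have : ((j - i : ℕ) : ℤ) = (j : ℤ) - i := by
      have := Nat.cast_sub hij (R := ℤ); omega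
    omega
  set F := fun i j (_ : i ≤ j) => f ^ (j - i) with hF
  -- the map out of the direct limit
  set L := Module.DirectLimit.lift K ℕ (fun _ : ℕ => V) F g Hg with hL
  -- the map back
  have hker : S ≤ LinearMap.ker (Module.DirectLimit.of K ℕ (fun _ : ℕ => V) F 0) := by
    intro x hx
    rcases (mem_iSup_ker_iff f x).1 hx with ⟨n, hn⟩
    have h0 : Module.DirectLimit.of K ℕ (fun _ : ℕ => V) F 0 x
        = Module.DirectLimit.of K ℕ (fun _ : ℕ => V) F n (F 0 n (Nat.zero_le n) x) :=
      (Module.DirectLimit.of_f (G := fun _ : ℕ => V) (f := F) (hij := Nat.zero_le n) (x := x)).symm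
    have h2 : F 0 n (Nat.zero_le n) x = 0 := by
      simpa [hF] using hn
    simp [LinearMap.mem_ker, h0, h2]
  set φ : (V ⧸ S) →ₗ[K] Module.DirectLimit (fun _ : ℕ => V) F :=
    S.liftQ (Module.DirectLimit.of K ℕ (fun _ : ℕ => V) F 0) hker with hφ
  have hφapp : ∀ x : V, φ (S.mkQ x) = Module.DirectLimit.of K ℕ (fun _ : ℕ => V) F 0 x :=
    fun x => rfl
  have h1 : L.comp φ = LinearMap.id := by
    apply Submodule.linearMap_qext
    ext x
    simp only [LinearMap.comp_apply, Submodule.mkQ_apply, LinearMap.id_apply]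
    rw [← Submodule.mkQ_apply, hφapp, hL, Module.DirectLimit.lift_of, hgapp]
    simp
  have h2 : φ.comp L = LinearMap.id := by
    refine LinearMap.ext fun z => ?_
    simp only [LinearMap.comp_apply, LinearMap.id_apply]
    induction z using Module.DirectLimit.induction_on with
    | ih i v =>
      rw [hL, Module.DirectLimit.lift_of, hgapp]
      obtain ⟨w, hw⟩ := S.mkQ_surjective ((B ^ (-(i : ℤ))) (S.mkQ v))
      rw [← hw, hφapp]
      have hw2 : S.mkQ ((f ^ i) w) = S.mkQ v := by
        rw [hpow, hw, ← hmul, ← zpow_add]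
        norm_num
      have hsub : (f ^ i) w - v ∈ S := (Submodule.Quotient.eq S).1 hw2
      rcases (mem_iSup_ker_iff f _).1 hsub with ⟨n, hn⟩
      have hfn : (f ^ (n + i)) w = (f ^ n) v := by
        have h : (f ^ n) ((f ^ i) w) = (f ^ n) v := by
          rw [map_sub] at hn; exact sub_eq_zero.1 hn
        rw [pow_add, Module.End.mul_apply, h]
      have e1 : Module.DirectLimit.of K ℕ (fun _ : ℕ => V) F 0 w
          = Module.DirectLimit.of K ℕ (fun _ : ℕ => V) F (i + n) (F 0 (i + n) (Nat.zero_le _) w) :=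
        (Module.DirectLimit.of_f (G := fun _ : ℕ => V) (f := F) (hij := Nat.zero_le (i + n)) (x := w)).symm
      have e2 : Module.DirectLimit.of K ℕ (fun _ : ℕ => V) F i v
          = Module.DirectLimit.of K ℕ (fun _ : ℕ => V) F (i + n)
              (F i (i + n) (Nat.le_add_right i n) v) :=
        (Module.DirectLimit.of_f (G := fun _ : ℕ => V) (f := F) (hij := Nat.le_add_right i n) (x := v)).symm
      rw [e1, e2]
      congr 1
      show (f ^ (i + n - 0)) w = (f ^ (i + n - i)) v
      rw [Nat.sub_zero, Nat.add_sub_cancel_left, add_comm i n, hfn]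
  refine ⟨LinearEquiv.ofLinear L φ h1 h2, ?_⟩
  intro v
  rw [LinearEquiv.ofLinear_apply, hL, Module.DirectLimit.lift_of, hgapp]
  simp
end

section
/- Let K be a nonarchimedean normed field, and let V be a K-vector space equipped with a norm satisfying ‖c • v‖ = ‖c‖·‖v‖ for all c ∈ K, v ∈ V, together with the ultrametric inequality ‖v+w‖ ≤ max(‖v‖,‖w‖). Let T : V → V be a K-linear map, let λ ∈ K be nonzero, and let x ∈ V satisfy (T − λ·id)^k x = 0 for some k ≥ 1. Then there exists a constant C ≥ 0 such that ‖T^N x‖ ≤ C · ‖λ‖^N for every natural number N. -/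
lemma nonarch_nat_norm_le_one {K : Type} [NormedField K]
    (hK : IsNonarchimedean (norm : K → ℝ)) (n : ℕ) : ‖(n : K)‖ ≤ 1 := by
  induction n with
  | zero => simp
  | succ m ih =>
    push_cast
    calc ‖(m : K) + 1‖ ≤ max ‖(m : K)‖ ‖(1 : K)‖ := hK _ _
    _ ≤ 1 := by simp [ih]

/-- Let `K` be a nonarchimedean normed field and `V` a `K`-vector space
with a norm satisfying `‖c • v‖ = ‖c‖ * ‖v‖` and the ultrametric inequality. Let
`T : V → V` be `K`-linear, `λ ≠ 0`, and `x` a generalized `λ`-eigenvector: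
`(T - λ·id)^k x = 0` for some `k ≥ 1`. Then there is `C ≥ 0` with
`‖T^N x‖ ≤ C * ‖λ‖^N` for all `N`. -/
theorem generalized_eigenvector_iterate_norm_upper_bound
    (K V : Type) [NormedField K] (hK : IsNonarchimedean (norm : K → ℝ))
    [NormedAddCommGroup V] [Module K V]
    (hsmul : ∀ (c : K) (v : V), ‖c • v‖ = ‖c‖ * ‖v‖)
    (hultra : ∀ v w : V, ‖v + w‖ ≤ max ‖v‖ ‖w‖)
    (T : Module.End K V) (lam : K) (hlam : lam ≠ 0)
    (x : V) (k : ℕ) (hk : 1 ≤ k) (hx : ((T - lam • 1) ^ k) x = 0) :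
    ∃ C : ℝ, 0 ≤ C ∧ ∀ N : ℕ, ‖(T ^ N) x‖ ≤ C * ‖lam‖ ^ N := by
  set S : Module.End K V := T - lam • 1 with hS
  have hlamnorm : (0 : ℝ) < ‖lam‖ := norm_pos_iff.mpr hlam
  -- f j = ‖S^j x‖ / ‖lam‖^j
  set f : ℕ → ℝ := fun j => ‖(S ^ j) x‖ / ‖lam‖ ^ j with hf
  have hfnonneg : ∀ j, 0 ≤ f j := fun j => by positivity
  have hfzero : ∀ j, k ≤ j → f j = 0 := by
    intro j hj
    have : (S ^ j) x = 0 := by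
      have : S ^ j = S ^ (j - k) * S ^ k := by
        rw [← pow_add]; congr 1; omega
      rw [this, Module.End.mul_apply, hx, map_zero]
    simp [hf, this]
  refine ⟨∑ j ∈ Finset.range k, f j, Finset.sum_nonneg fun j _ => hfnonneg j, ?_⟩
  intro N
  have hc : Commute S (lam • (1 : Module.End K V)) := by
    apply Commute.smul_right
    exact Commute.one_right S
  have hT : T = S + lam • 1 := by rw [hS]; abel
  have expand : (T ^ N) x
      = ∑ j ∈ Finset.range (N + 1),
          (Nat.choose N j : K) • (lam ^ (N - j)) • ((S ^ j) x) := by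
    rw [hT, hc.add_pow]
    rw [LinearMap.sum_apply]
    refine Finset.sum_congr rfl fun j hj => ?_
    rw [Module.End.mul_apply, Module.End.mul_apply]
    have h1 : ((N.choose j : Module.End K V)) x = (N.choose j : K) • x := by
      simp [Nat.cast_smul_eq_nsmul]
    rw [h1]
    have h2 : (lam • (1 : Module.End K V)) ^ (N - j) = (lam ^ (N - j)) • 1 := by
      rw [smul_pow, one_pow]
    rw [h2]
    simp only [LinearMap.smul_apply, Module.End.one_apply, map_smul]
  calc ‖(T ^ N) x‖
      ≤ ∑ j ∈ Finset.range (N + 1),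
          ‖(Nat.choose N j : K) • (lam ^ (N - j)) • ((S ^ j) x)‖ := by
        rw [expand]; exact norm_sum_le _ _
    _ ≤ ∑ j ∈ Finset.range (N + 1), f j * ‖lam‖ ^ N := by
        refine Finset.sum_le_sum fun j hj => ?_
        have hjN : j ≤ N := by
          have := Finset.mem_range.mp hj; omega
        rw [hsmul, hsmul, norm_pow]
        have hb : ‖((Nat.choose N j : K))‖ ≤ 1 := nonarch_nat_norm_le_one hK _
        have key : ‖lam‖ ^ (N - j) * ‖(S ^ j) x‖ = f j * ‖lam‖ ^ N := by
          rw [hf]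
          field_simp
          have hp : ‖lam‖ ^ (N - j) * ‖lam‖ ^ j = ‖lam‖ ^ N := by
            rw [← pow_add]; congr 1; omega
          rw [mul_right_comm, hp, mul_comm]
        calc ‖((Nat.choose N j : K))‖ * (‖lam‖ ^ (N - j) * ‖(S ^ j) x‖)
            ≤ 1 * (‖lam‖ ^ (N - j) * ‖(S ^ j) x‖) := by
              apply mul_le_mul_of_nonneg_right hb; positivity
          _ = f j * ‖lam‖ ^ N := by rw [one_mul, key]
    _ = (∑ j ∈ Finset.range (N + 1), f j) * ‖lam‖ ^ N := by
        rw [← Finset.sum_mul]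
    _ ≤ (∑ j ∈ Finset.range k, f j) * ‖lam‖ ^ N := by
        apply mul_le_mul_of_nonneg_right _ (by positivity)
        have h1 : ∑ j ∈ Finset.range (N + 1), f j
            ≤ ∑ j ∈ Finset.range (N + 1 + k), f j :=
          Finset.sum_le_sum_of_subset_of_nonneg
            (Finset.range_subset_range.mpr (by omega)) (fun j _ _ => hfnonneg j)
        have h2 : ∑ j ∈ Finset.range (N + 1 + k), f j
            = ∑ j ∈ Finset.range k, f j := by
          symm
          apply Finset.sum_subset (Finset.range_subset_range.mpr (by omega))
          intro j _ hj
          exact hfzero j (by simpa using hj)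
        linarith
end

section
/- Let K be a complete, nontrivially normed, nonarchimedean normed field, and let V be a finite-dimensional K-vector space equipped with a norm satisfying ‖c • v‖ = ‖c‖·‖v‖ and the ultrametric inequality ‖v+w‖ ≤ max(‖v‖,‖w‖). Let T : V → V be a K-linear map, let λ ∈ K be nonzero, and let x ≠ 0 satisfy (T − λ·id)^k x = 0 for some k ≥ 1. Then there exist constants c, C > 0 such that c · ‖λ‖^N ≤ ‖T^N x‖ ≤ C · ‖λ‖^N for every natural number N. -/
/-- Let `K` be a complete, nontrivially normed, nonarchimedean normed
field, and `V` a finite-dimensional `K`-vector space with a norm satisfying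
`‖c • v‖ = ‖c‖ * ‖v‖` and the ultrametric inequality. Let `T : V → V` be `K`-linear,
`λ ≠ 0`, and `x ≠ 0` a generalized `λ`-eigenvector: `(T - λ·id)^k x = 0` for some `k ≥ 1`.
Then there are constants `c, C > 0` with `c * ‖λ‖^N ≤ ‖T^N x‖ ≤ C * ‖λ‖^N` for all `N`. -/
theorem generalized_eigenvector_iterate_norm_two_sided_bound
    (K V : Type) [NontriviallyNormedField K] [CompleteSpace K]
    (hK : IsNonarchimedean (norm : K → ℝ))
    [NormedAddCommGroup V] [Module K V] [FiniteDimensional K V]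
    (hsmul : ∀ (c : K) (v : V), ‖c • v‖ = ‖c‖ * ‖v‖)
    (hultra : ∀ v w : V, ‖v + w‖ ≤ max ‖v‖ ‖w‖)
    (T : Module.End K V) (lam : K) (hlam : lam ≠ 0)
    (x : V) (hx : x ≠ 0) (k : ℕ) (hk : 1 ≤ k) (hmem : ((T - lam • 1) ^ k) x = 0) :
    ∃ c C : ℝ, 0 < c ∧ 0 < C ∧
      ∀ N : ℕ, c * ‖lam‖ ^ N ≤ ‖(T ^ N) x‖ ∧ ‖(T ^ N) x‖ ≤ C * ‖lam‖ ^ N := by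
  letI : NormedSpace K V := ⟨fun c v => le_of_eq (hsmul c v)⟩
  have hlamnorm : (0:ℝ) < ‖lam‖ := norm_pos_iff.mpr hlam
  set S : Module.End K V := T - lam • 1 with hS
  have hTS : T = S + lam • 1 := by rw [hS]; abel
  have hnat : ∀ n : ℕ, ‖(n : K)‖ ≤ 1 := by
    intro n
    induction n with
    | zero => simp
    | succ n ih =>
      push_cast
      calc ‖(n:K)+1‖ ≤ max ‖(n:K)‖ ‖(1:K)‖ := hK _ _
      _ ≤ 1 := by simp [ih]
  -- the index of the last nonvanishing power
  classical
  have hP : ∃ n, (S ^ n) x = 0 := ⟨k, hmem⟩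
  set n0 := Nat.find hP with hn0def
  have hn0 : (S ^ n0) x = 0 := Nat.find_spec hP
  have hn0pos : 0 < n0 := by
    rcases Nat.eq_zero_or_pos n0 with h | h
    · exfalso; apply hx; rw [h] at hn0; simpa using hn0
    · exact h
  set m := n0 - 1 with hm
  have hmn : m + 1 = n0 := Nat.succ_pred_eq_of_pos hn0pos
  have hy : (S ^ m) x ≠ 0 := Nat.find_min hP (by omega)
  set y := (S ^ m) x with hydef
  have hSy : S y = 0 := by
    have h1 : (S ^ (m+1)) x = 0 := by rw [hmn]; exact hn0
    rw [pow_succ'] at h1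
    simpa [Module.End.mul_apply] using h1
  have hTy1 : T y = lam • y := by
    rw [hTS]
    simp [hSy]
  have hTy : ∀ N : ℕ, (T ^ N) y = lam ^ N • y := by
    intro N
    induction N with
    | zero => simp
    | succ n ih =>
      rw [pow_succ, Module.End.mul_apply, hTy1, map_smul, ih, smul_smul, pow_succ, mul_comm]
  have hc : Commute S T := by
    rw [hS]
    exact (Commute.refl T).sub_left ((Commute.one_left T).smul_left lam)
  have key : ∀ N, (S ^ m) ((T ^ N) x) = lam ^ N • y := by
    intro N
    have h2 : (S ^ m) ((T ^ N) x) = (T ^ N) ((S ^ m) x) := by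
      rw [← Module.End.mul_apply, ← Module.End.mul_apply, (hc.pow_pow m N).eq]
    rw [h2, ← hydef, hTy]
  -- bound for S^m as a continuous linear map
  let f : V →L[K] V := ⟨(S ^ m : Module.End K V),
    LinearMap.continuous_of_finiteDimensional _⟩
  have hfapp : ∀ v : V, f v = (S ^ m) v := fun v => rfl
  have hB : (0:ℝ) < ‖f‖ := by
    by_contra h
    push_neg at h
    have : ‖f x‖ ≤ ‖f‖ * ‖x‖ := f.le_opNorm x
    have hle : ‖f x‖ ≤ 0 := this.trans (by nlinarith [norm_nonneg x])
    have : f x = 0 := norm_le_zero_iff.mp hle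
    exact hy (by rwa [hfapp] at this)
  have hypos : (0:ℝ) < ‖y‖ := norm_pos_iff.mpr hy
  -- the constants
  refine ⟨‖y‖ / ‖f‖, ∑ j ∈ Finset.range n0, ‖lam‖⁻¹ ^ j * ‖(S ^ j) x‖,
    div_pos hypos hB, ?_, ?_⟩
  · apply lt_of_lt_of_le (norm_pos_iff.mpr hx)
    have h0 : (0:ℕ) ∈ Finset.range n0 := Finset.mem_range.mpr hn0pos
    calc ‖x‖ = ‖lam‖⁻¹ ^ 0 * ‖(S ^ 0) x‖ := by simp
    _ ≤ _ := Finset.single_le_sum (f := fun j => ‖lam‖⁻¹ ^ j * ‖(S ^ j) x‖)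
        (fun j _ => by positivity) h0
  intro N
  constructor
  · -- lower bound
    have h3 : ‖lam‖ ^ N * ‖y‖ ≤ ‖f‖ * ‖(T ^ N) x‖ := by
      calc ‖lam‖ ^ N * ‖y‖ = ‖lam ^ N • y‖ := by rw [hsmul, norm_pow]
      _ = ‖f ((T ^ N) x)‖ := by rw [hfapp, key]
      _ ≤ ‖f‖ * ‖(T ^ N) x‖ := f.le_opNorm _
    rw [div_mul_eq_mul_div, div_le_iff₀ hB]
    nlinarith
  · -- upper bound via binomial expansion
    have hc2 : Commute S ((lam:K) • (1 : Module.End K V)) :=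
      ((Commute.one_right S).smul_right lam)
    have expand : (T ^ N) x =
        ∑ j ∈ Finset.range (N+1),
          (lam ^ (N - j) * (N.choose j : K)) • (S ^ j) x := by
      rw [hTS, hc2.add_pow]
      rw [LinearMap.coe_sum, Finset.sum_apply]
      refine Finset.sum_congr rfl fun j hj => ?_
      have : ((lam • (1 : Module.End K V)) ^ (N - j)) = lam ^ (N - j) • 1 := by
        rw [smul_pow, one_pow]
      rw [this]
      simp [Module.End.mul_apply, mul_smul, Nat.cast_smul_eq_nsmul]
    rw [expand]
    calc ‖∑ j ∈ Finset.range (N+1),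
          (lam ^ (N - j) * (N.choose j : K)) • (S ^ j) x‖
        ≤ ∑ j ∈ Finset.range (N+1),
            ‖(lam ^ (N - j) * (N.choose j : K)) • (S ^ j) x‖ := norm_sum_le _ _
      _ ≤ ∑ j ∈ Finset.range (N+1),
            (if j < n0 then ‖lam‖ ^ N * (‖lam‖⁻¹ ^ j * ‖(S ^ j) x‖) else 0) := by
          refine Finset.sum_le_sum fun j hj => ?_
          rw [hsmul, norm_mul, norm_pow]
          by_cases hjn : j < n0
          · rw [if_pos hjn]
            have hjN : j ≤ N := Nat.lt_succ_iff.mp (Finset.mem_range.mp hj)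
            have hpow : ‖lam‖ ^ (N - j) = ‖lam‖ ^ N * ‖lam‖⁻¹ ^ j := by
              rw [inv_pow]
              field_simp
              rw [← pow_add, Nat.sub_add_cancel hjN]
            rw [hpow]
            have hch := hnat (N.choose j)
            have heq : ‖lam‖ ^ N * ‖lam‖⁻¹ ^ j * ‖(N.choose j : K)‖ * ‖(S ^ j) x‖
                = (‖lam‖ ^ N * (‖lam‖⁻¹ ^ j * ‖(S ^ j) x‖)) * ‖(N.choose j : K)‖ := by ring
            rw [heq]
            exact mul_le_of_le_one_right (by positivity) hch
          · rw [if_neg hjn]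
            have hjge : n0 ≤ j := Nat.le_of_not_lt hjn
            have : (S ^ j) x = 0 := by
              have : S ^ j = S ^ (j - n0) * S ^ n0 := by
                rw [← pow_add, Nat.sub_add_cancel hjge]
              rw [this, Module.End.mul_apply, hn0, map_zero]
            simp [this]
      _ = ∑ j ∈ (Finset.range (N+1)).filter (· < n0),
            ‖lam‖ ^ N * (‖lam‖⁻¹ ^ j * ‖(S ^ j) x‖) := (Finset.sum_filter _ _).symm
      _ ≤ ∑ j ∈ Finset.range n0, ‖lam‖ ^ N * (‖lam‖⁻¹ ^ j * ‖(S ^ j) x‖) := by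
          refine Finset.sum_le_sum_of_subset_of_nonneg ?_ (fun j _ _ => by positivity)
          intro j hj
          simp only [Finset.mem_filter, Finset.mem_range] at hj ⊢
          exact hj.2
      _ = (∑ j ∈ Finset.range n0, ‖lam‖⁻¹ ^ j * ‖(S ^ j) x‖) * ‖lam‖ ^ N := by
          rw [Finset.sum_mul]
          exact Finset.sum_congr rfl fun j _ => by ring
end

section
/- Let K be a complete, nontrivially normed, nonarchimedean normed field, and let V be a finite-dimensional K-vector space equipped with a norm satisfying ‖c • v‖ = ‖c‖·‖v‖ and the ultrametric inequality ‖v+w‖ ≤ max(‖v‖,‖w‖). Let B : V → V be a K-linear endomorphism whose characteristic polynomial splits over K. Then for v ∈ V, the iterates B^N v tend to 0 as N → ∞ if and only if v lies in the sum of the generalized λ-eigenspaces of B over all eigenvalues λ with ‖λ‖ < 1 (including λ = 0). -/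
open Filter Polynomial Module

section Aux

variable {K V : Type} [NontriviallyNormedField K] [CompleteSpace K]
  [NormedAddCommGroup V] [Module K V] [FiniteDimensional K V]

private lemma aux_nat_norm (hK : IsNonarchimedean (norm : K → ℝ)) (n : ℕ) : ‖(n : K)‖ ≤ 1 := by
  induction n with
  | zero => simp
  | succ n ih =>
    push_cast
    exact le_trans (hK _ _) (by simp [ih])

private lemma aux_sum_norm (hultra : ∀ v w : V, ‖v + w‖ ≤ max ‖v‖ ‖w‖)
    {ι : Type*} (s : Finset ι) (f : ι → V) {C : ℝ} (hC : 0 ≤ C)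
    (h : ∀ i ∈ s, ‖f i‖ ≤ C) : ‖∑ i ∈ s, f i‖ ≤ C := by
  classical
  induction s using Finset.induction_on with
  | empty => simpa using hC
  | insert _ _ hx ih =>
    rw [Finset.sum_insert hx]
    exact le_trans (hultra _ _) (max_le (h _ (Finset.mem_insert_self _ _))
      (ih fun i hi => h i (Finset.mem_insert_of_mem hi)))

private lemma aux_small (hK : IsNonarchimedean (norm : K → ℝ))
    (hsmul : ∀ (c : K) (v : V), ‖c • v‖ = ‖c‖ * ‖v‖)
    (hultra : ∀ v w : V, ‖v + w‖ ≤ max ‖v‖ ‖w‖)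
    (B : Module.End K V) {μ : K} (hμ : ‖μ‖ < 1) {k : ℕ} {v : V}
    (hv : ((B - μ • 1) ^ k) v = 0) :
    Tendsto (fun n : ℕ => (B ^ n) v) atTop (nhds 0) := by
  set N : Module.End K V := B - μ • 1 with hN
  have hcomm : Commute (μ • (1 : Module.End K V)) N :=
    ((Commute.one_left N).smul_left μ)
  have hB : B = μ • 1 + N := by rw [hN]; abel
  set M : ℝ := ∑ j ∈ Finset.range k, ‖(N ^ j) v‖ with hM
  have hM0 : 0 ≤ M := Finset.sum_nonneg fun _ _ => norm_nonneg _
  have hterm : ∀ j, j < k → ‖(N ^ j) v‖ ≤ M := by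
    intro j hj
    exact Finset.single_le_sum (f := fun j => ‖(N ^ j) v‖)
      (fun _ _ => norm_nonneg _) (Finset.mem_range.mpr hj)
  have key : ∀ n, k ≤ n → ‖(B ^ n) v‖ ≤ ‖μ‖ ^ (n + 1 - k) * M := by
    intro n hn
    have hpow := hcomm.add_pow n
    rw [hB, hpow]
    rw [LinearMap.coe_sum, Finset.sum_apply]
    apply aux_sum_norm hultra _ _ (by positivity)
    intro m hm
    rw [Finset.mem_range] at hm
    have hterm_eq : ((μ • (1 : Module.End K V)) ^ m * N ^ (n - m) * ↑(n.choose m)) v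
        = μ ^ m • (((n.choose m : K)) • ((N ^ (n - m)) v)) := by
      rw [_root_.smul_pow, one_pow]
      simp only [Module.End.mul_apply, Module.End.natCast_apply, LinearMap.smul_apply,
        Module.End.one_apply]
      rw [map_nsmul, Nat.cast_smul_eq_nsmul]
    rw [hterm_eq]
    by_cases hcase : k ≤ n - m
    · have : (N ^ (n - m)) v = 0 := by
        rw [show n - m = (n - m - k) + k by omega, pow_add, Module.End.mul_apply, hv, map_zero]
      rw [this]
      simp only [smul_zero, norm_zero]
      positivity
    · have hmge : n + 1 - k ≤ m := by omega
      rw [hsmul, hsmul, norm_pow]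
      have h1 : ‖μ‖ ^ m ≤ ‖μ‖ ^ (n + 1 - k) :=
        pow_le_pow_of_le_one (norm_nonneg μ) hμ.le hmge
      have h2 : ‖(n.choose m : K)‖ * ‖(N ^ (n - m)) v‖ ≤ M := by
        calc ‖(n.choose m : K)‖ * ‖(N ^ (n - m)) v‖
            ≤ 1 * ‖(N ^ (n - m)) v‖ :=
              mul_le_mul_of_nonneg_right (aux_nat_norm hK _) (norm_nonneg _)
          _ = ‖(N ^ (n - m)) v‖ := one_mul _
          _ ≤ M := hterm _ (by omega)
      exact mul_le_mul h1 h2 (by positivity) (by positivity)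
  have h1 : Tendsto (fun n : ℕ => n + 1 - k) atTop atTop := by
    apply tendsto_atTop_atTop.mpr
    intro b
    exact ⟨b + k, fun n hn => by omega⟩
  have h2 : Tendsto (fun n : ℕ => ‖μ‖ ^ (n + 1 - k) * M) atTop (nhds 0) := by
    have := ((tendsto_pow_atTop_nhds_zero_of_lt_one (norm_nonneg μ) hμ).comp h1).mul_const M
    simpa using this
  apply squeeze_zero_norm' _ h2
  filter_upwards [eventually_atTop.mpr ⟨k, fun n hn => key n hn⟩] with n hn using hn

private lemma aux_big (hsmul : ∀ (c : K) (v : V), ‖c • v‖ = ‖c‖ * ‖v‖)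
    (B : Module.End K V) {μ : K} (hμ : 1 ≤ ‖μ‖) {k : ℕ} {v : V}
    (hv : ((B - μ • 1) ^ k) v = 0)
    (ht : Tendsto (fun n : ℕ => (B ^ n) v) atTop (nhds 0)) : v = 0 := by
  letI : NormedSpace K V := ⟨fun c x => (hsmul c x).le⟩
  by_contra hv0
  set N : Module.End K V := B - μ • 1 with hNdef
  have hex : ∃ m, (N ^ m) v = 0 := ⟨k, hv⟩
  classical
  set m := Nat.find hex with hmdef
  have hm0 : m ≠ 0 := by
    intro h
    have := Nat.find_spec hex
    rw [← hmdef, h, pow_zero, Module.End.one_apply] at this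
    exact hv0 this
  obtain ⟨j, hj⟩ := Nat.exists_eq_succ_of_ne_zero hm0
  have hw0 : (N ^ j) v ≠ 0 := Nat.find_min hex (by omega)
  set w : V := (N ^ j) v with hwdef
  have hNw : N w = 0 := by
    have hspec := Nat.find_spec hex
    rw [← hmdef, hj, pow_succ', Module.End.mul_apply] at hspec
    exact hspec
  have hBw : B w = μ • w := by
    have : (B - μ • 1) w = 0 := hNw
    rw [LinearMap.sub_apply, LinearMap.smul_apply, Module.End.one_apply, sub_eq_zero] at this
    exact this
  have hBnw : ∀ n : ℕ, (B ^ n) w = μ ^ n • w := by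
    intro n
    induction n with
    | zero => simp
    | succ n ih =>
      rw [pow_succ', Module.End.mul_apply, ih, map_smul, hBw, smul_smul, ← pow_succ]
  have hcommBN : Commute B N := (Commute.refl B).sub_right ((Commute.one_right B).smul_right μ)
  have hcont : Continuous (N ^ j : Module.End K V) :=
    LinearMap.continuous_of_finiteDimensional _
  have h2 : Tendsto (fun n : ℕ => (N ^ j) ((B ^ n) v)) atTop (nhds 0) := by
    have := (hcont.tendsto 0).comp ht
    simpa [map_zero, Function.comp_def] using this
  have h3 : ∀ n : ℕ, (N ^ j) ((B ^ n) v) = μ ^ n • w := by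
    intro n
    rw [← Module.End.mul_apply, ((hcommBN.symm.pow_pow j n)).eq, Module.End.mul_apply,
      ← hwdef, hBnw]
  simp only [h3] at h2
  have hnorm : Tendsto (fun n : ℕ => ‖μ ^ n • w‖) atTop (nhds 0) := by
    simpa using h2.norm
  have hlb : ∀ n : ℕ, ‖w‖ ≤ ‖μ ^ n • w‖ := by
    intro n
    rw [hsmul, norm_pow]
    nlinarith [one_le_pow₀ hμ (n := n), norm_nonneg w]
  have : ‖w‖ ≤ 0 := ge_of_tendsto hnorm (Eventually.of_forall hlb)
  exact hw0 (norm_le_zero_iff.mp this)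

private lemma aux_span (B : Module.End K V) :
    ∀ n : ℕ, ∀ p : K[X], p.natDegree = n → p ≠ 0 → p.Splits →
      ∀ v : V, (Polynomial.aeval B p) v = 0 →
      v ∈ ⨆ (μ : K), ⨆ k : ℕ, LinearMap.ker ((B - μ • 1) ^ k) := by
  intro n
  induction n using Nat.strong_induction_on with
  | _ n ih =>
    intro p hdeg hp0 hps v hv
    by_cases hn0 : p.natDegree = 0
    · have hc : p = Polynomial.C (p.coeff 0) := Polynomial.eq_C_of_natDegree_eq_zero hn0
      rw [hc, Polynomial.aeval_C, Module.algebraMap_end_apply] at hv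
      have hc0 : p.coeff 0 ≠ 0 := fun h => hp0 (by rw [hc, h, Polynomial.C_0])
      have hv0 : v = 0 := by
        rcases smul_eq_zero.mp hv with h | h
        · exact absurd h hc0
        · exact h
      rw [hv0]
      exact Submodule.zero_mem _
    · have hdeg0 : p.degree ≠ 0 := fun h => hn0 (Polynomial.natDegree_eq_zero_iff_degree_le_zero.mpr h.le)
      obtain ⟨μ, hμ⟩ := Polynomial.Splits.exists_eval_eq_zero hps hdeg0
      have hroot : p.IsRoot μ := by simpa using hμ
      obtain ⟨q, hq, hndvd⟩ := p.exists_eq_pow_rootMultiplicity_mul_and_not_dvd hp0 μ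
      set m := p.rootMultiplicity μ with hmdef
      have hm : 0 < m := (Polynomial.rootMultiplicity_pos hp0).mpr hroot
      have hq0 : q ≠ 0 := fun h => hp0 (by rw [hq, h, mul_zero])
      have hqs : q.Splits :=
        Polynomial.Splits.of_dvd hps hp0 ⟨(Polynomial.X - Polynomial.C μ) ^ m, by rw [hq]; ring⟩
      have hqd : q.natDegree < n := by
        have hnd := congrArg Polynomial.natDegree hq
        rw [Polynomial.natDegree_mul (pow_ne_zero _ (Polynomial.X_sub_C_ne_zero μ)) hq0,
          Polynomial.natDegree_pow, Polynomial.natDegree_X_sub_C] at hnd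
        omega
      have hcop : IsCoprime ((Polynomial.X - Polynomial.C μ) ^ m) q :=
        (((Polynomial.irreducible_X_sub_C μ).coprime_iff_not_dvd.mpr hndvd)).pow_left
      obtain ⟨a, b, hab⟩ := hcop
      have hv2 : v = (Polynomial.aeval B (a * (Polynomial.X - Polynomial.C μ) ^ m)) v
          + (Polynomial.aeval B (b * q)) v := by
        have := congrArg (fun r : K[X] => (Polynomial.aeval B r) v) hab
        simp only [map_add, LinearMap.add_apply, map_one, Module.End.one_apply] at this
        exact this.symm
      rw [hv2]
      refine Submodule.add_mem _ ?_ ?_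
      · apply ih q.natDegree hqd q rfl hq0 hqs
        rw [← Module.End.mul_apply, ← map_mul,
          show q * (a * (Polynomial.X - Polynomial.C μ) ^ m) = a * p by rw [hq]; ring,
          map_mul, Module.End.mul_apply, hv, map_zero]
      · have haev : Polynomial.aeval B ((Polynomial.X - Polynomial.C μ) ^ m)
            = (B - μ • 1) ^ m := by
          rw [map_pow]
          congr 1
          rw [map_sub, Polynomial.aeval_X, Polynomial.aeval_C,
            Module.algebraMap_end_eq_smul_id]
          rfl
        have hker : ((B - μ • 1) ^ m) ((Polynomial.aeval B (b * q)) v) = 0 := by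
          rw [← haev, ← Module.End.mul_apply, ← map_mul,
            show (Polynomial.X - Polynomial.C μ) ^ m * (b * q) = b * p by rw [hq]; ring,
            map_mul, Module.End.mul_apply, hv, map_zero]
        apply Submodule.mem_iSup_of_mem μ
        apply Submodule.mem_iSup_of_mem m
        exact hker

end Aux

/-- Let `K` be a complete, nontrivially normed, nonarchimedean normed
field and `V` a finite-dimensional `K`-vector space with a norm satisfying
`‖c • v‖ = ‖c‖ * ‖v‖` and the ultrametric inequality. Let `B : V → V` be a `K`-linear
endomorphism whose characteristic polynomial splits over `K`. Then `B^N v → 0` as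
`N → ∞` if and only if `v` lies in the sum of the generalized `λ`-eigenspaces of `B`
over all `λ` with `‖λ‖ < 1` (including `λ = 0`). -/
theorem iterates_tendsto_zero_iff_mem_small_eigenvalue_generalized_eigenspaces
    (K V : Type) [NontriviallyNormedField K] [CompleteSpace K]
    (hK : IsNonarchimedean (norm : K → ℝ))
    [NormedAddCommGroup V] [Module K V] [FiniteDimensional K V]
    (hsmul : ∀ (c : K) (v : V), ‖c • v‖ = ‖c‖ * ‖v‖)
    (hultra : ∀ v w : V, ‖v + w‖ ≤ max ‖v‖ ‖w‖)
    (B : Module.End K V)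
    (hsplit : (LinearMap.charpoly B).Splits) (v : V) :
    Filter.Tendsto (fun N : ℕ => (B ^ N) v) Filter.atTop (nhds 0) ↔
      v ∈ ⨆ (μ : K) (_ : ‖μ‖ < 1), ⨆ k : ℕ, LinearMap.ker ((B - μ • 1) ^ k) := by
  classical
  letI : NormedSpace K V := ⟨fun c x => (hsmul c x).le⟩
  set W : K → Submodule K V := fun μ => ⨆ k : ℕ, LinearMap.ker ((B - μ • 1) ^ k) with hWdef
  have hWker : ∀ μ : K, W μ = LinearMap.ker ((B - μ • 1) ^ (Module.finrank K V)) := by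
    intro μ
    rw [hWdef]
    simp_rw [← Module.End.genEigenspace_nat (f := B) (μ := μ),
      ← Module.End.genEigenspace_top B μ]
    exact Module.End.maxGenEigenspace_eq_genEigenspace_finrank B μ
  -- the set of vectors whose iterates tend to zero is a submodule
  set T : Submodule K V :=
    { carrier := {x | Tendsto (fun n : ℕ => (B ^ n) x) atTop (nhds 0)}
      add_mem' := by
        intro x y hx hy
        have := hx.add hy
        simpa [map_add] using this
      zero_mem' := by simp [tendsto_const_nhds]
      smul_mem' := by
        intro c x hx
        have := hx.const_smul c
        simpa [map_smul] using this } with hTdef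
  have hle : (⨆ (μ : K) (_ : ‖μ‖ < 1), W μ) ≤ T := by
    refine iSup_le fun μ => iSup_le fun hμ => ?_
    rw [hWdef]
    refine iSup_le fun k => fun x hx => ?_
    exact aux_small hK hsmul hultra B hμ (LinearMap.mem_ker.mp hx)
  constructor
  · intro htd
    have hvS : v ∈ ⨆ μ : K, W μ := by
      apply aux_span B (LinearMap.charpoly B).natDegree (LinearMap.charpoly B) rfl
        (LinearMap.charpoly_monic B).ne_zero hsplit v
      rw [LinearMap.aeval_self_charpoly]
      rfl
    have hsplitsup : (⨆ μ : K, W μ) ≤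
        (⨆ (μ : K) (_ : ‖μ‖ < 1), W μ) ⊔ (⨆ μ : {μ : K // 1 ≤ ‖μ‖}, W ↑μ) := by
      refine iSup_le fun μ => ?_
      by_cases h : ‖μ‖ < 1
      · exact le_sup_of_le_left (le_iSup₂ (f := fun (μ : K) (_ : ‖μ‖ < 1) => W μ) μ h)
      · exact le_sup_of_le_right
          (le_iSup (fun μ : {μ : K // 1 ≤ ‖μ‖} => W ↑μ) ⟨μ, not_lt.mp h⟩)
    obtain ⟨s, hs, b, hb, hsb⟩ := Submodule.mem_sup.mp (hsplitsup hvS)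
    have hsT : Tendsto (fun n : ℕ => (B ^ n) s) atTop (nhds 0) := hle hs
    have hbT : Tendsto (fun n : ℕ => (B ^ n) b) atTop (nhds 0) := by
      have hbv : b = v - s := by rw [← hsb]; abel
      rw [hbv]
      have := htd.sub hsT
      simpa [map_sub] using this
    -- commutation facts
    have hsub : ∀ α β : K, Commute (B - α • 1) (B - β • (1 : Module.End K V)) := by
      intro α β
      exact (((Commute.refl B).sub_right ((Commute.one_right B).smul_right β)).sub_left
        (((Commute.one_left (B - β • 1)).smul_left α)))
    have hcommB : ∀ α : K, Commute B (B - α • (1 : Module.End K V)) :=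
      fun α => (Commute.refl B).sub_right ((Commute.one_right B).smul_right α)
    -- key induction: vectors in a finite sup of big generalized eigenspaces
    have key : ∀ t : Finset {μ : K // 1 ≤ ‖μ‖}, ∀ x : V,
        x ∈ (⨆ μ ∈ t, W ↑μ) → Tendsto (fun n : ℕ => (B ^ n) x) atTop (nhds 0) → x = 0 := by
      intro t
      induction t using Finset.induction_on with
      | empty => intro x hx _; simpa using hx
      | @insert a t ha iht =>
        intro x hx hxt
        rw [Finset.iSup_insert] at hx
        obtain ⟨y, hy, z, hz, hyz⟩ := Submodule.mem_sup.mp hx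
        set g : Module.End K V := (B - (↑a : K) • 1) ^ (Module.finrank K V) with hgdef
        have hgy : g y = 0 := by
          have : y ∈ LinearMap.ker g := (hWker ↑a) ▸ hy
          exact LinearMap.mem_ker.mp this
        have hmaple : (⨆ μ ∈ t, W (↑μ : K)).map g ≤ ⨆ μ ∈ t, W ↑μ := by
          rw [Submodule.map_iSup]
          refine iSup_mono fun μ => ?_
          rw [Submodule.map_iSup]
          refine iSup_mono' fun hμ => ⟨hμ, ?_⟩
          rw [Submodule.map_le_iff_le_comap]
          intro u hu
          rw [hWker] at hu ⊢
          have hcomm : Commute g ((B - (↑μ : K) • 1) ^ Module.finrank K V) :=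
            (hsub _ _).pow_pow _ _
          rw [LinearMap.mem_ker] at hu
          simp only [Submodule.mem_comap, LinearMap.mem_ker]
          rw [← Module.End.mul_apply, ← hcomm.eq, Module.End.mul_apply, hu, map_zero]
        have hgx : g x ∈ ⨆ μ ∈ t, W ↑μ := by
          have : g x = g z := by rw [← hyz, map_add, hgy, zero_add]
          rw [this]
          exact hmaple (Submodule.mem_map_of_mem hz)
        have hgxt : Tendsto (fun n : ℕ => (B ^ n) (g x)) atTop (nhds 0) := by
          have hc : Continuous g := LinearMap.continuous_of_finiteDimensional _
          have h1 := (hc.tendsto 0).comp hxt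
          have heq : ∀ n : ℕ, g ((B ^ n) x) = (B ^ n) (g x) := by
            intro n
            rw [← Module.End.mul_apply, ← (((hcommB ↑a).pow_right _).pow_left n).eq,
              Module.End.mul_apply]
          simp only [Function.comp_def, heq, map_zero] at h1
          exact h1
        have hgx0 : g x = 0 := iht (g x) hgx hgxt
        exact aux_big hsmul B a.2 (hgx0 : ((B - (↑a : K) • 1) ^ Module.finrank K V) x = 0) hxt
    obtain ⟨t, hbt⟩ := Submodule.mem_iSup_iff_exists_finset.mp hb
    have hb0 : b = 0 := key t b hbt hbT
    rw [← hsb, hb0, add_zero]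
    exact hs
  · intro hv
    exact hle hv
end

section
/- Let K be a complete, nontrivially normed, nonarchimedean normed field, and let V be a finite-dimensional K-vector space equipped with a norm satisfying ‖c • v‖ = ‖c‖·‖v‖ and the ultrametric inequality ‖v+w‖ ≤ max(‖v‖,‖w‖). Let B : V → V be a K-linear endomorphism whose characteristic polynomial splits over K. Then for v ∈ V, the sequence of norms ‖B^N v‖ is bounded if and only if v lies in the sum of the generalized λ-eigenspaces of B over all eigenvalues λ with ‖λ‖ ≤ 1 (including λ = 0). -/
open Polynomial

section Aux

variable {K V : Type} [NontriviallyNormedField K]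
  [NormedAddCommGroup V] [Module K V]

/-- In a nonarchimedean field, natural numbers have norm at most one. -/
lemma aux_norm_natCast_le_one (hK : IsNonarchimedean (norm : K → ℝ)) :
    ∀ n : ℕ, ‖(n : K)‖ ≤ 1 := by
  intro n
  induction n with
  | zero => simp
  | succ n ih =>
      push_cast
      refine (hK _ _).trans ?_
      simp [ih]

/-- Ultrametric bound for finite sums of vectors. -/
lemma aux_norm_sum_le {ι : Type*} (hultra : ∀ v w : V, ‖v + w‖ ≤ max ‖v‖ ‖w‖)
    (s : Finset ι) (f : ι → V) {C : ℝ} (hC : 0 ≤ C) (h : ∀ i ∈ s, ‖f i‖ ≤ C) :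
    ‖∑ i ∈ s, f i‖ ≤ C := by
  classical
  induction s using Finset.induction_on with
  | empty => simpa using hC
  | @insert a s' hx ih =>
      rw [Finset.sum_insert hx]
      refine (hultra _ _).trans (max_le (h a (Finset.mem_insert_self a s')) ?_)
      exact ih fun i hi => h i (Finset.mem_insert_of_mem hi)

/-- Bounded iterates for generalized eigenvectors with eigenvalue of norm at most one. -/
lemma aux_bounded_of_mem_ker (hK : IsNonarchimedean (norm : K → ℝ))
    (hsmul : ∀ (c : K) (v : V), ‖c • v‖ = ‖c‖ * ‖v‖)
    (hultra : ∀ v w : V, ‖v + w‖ ≤ max ‖v‖ ‖w‖)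
    (B : Module.End K V) {μ : K} (hμ : ‖μ‖ ≤ 1) {k : ℕ} {v : V}
    (hv : v ∈ LinearMap.ker ((B - μ • 1) ^ k)) :
    ∃ M : ℝ, ∀ N : ℕ, ‖(B ^ N) v‖ ≤ M := by
  classical
  set A : Module.End K V := B - μ • 1 with hA
  have hvk : (A ^ k) v = 0 := hv
  have hvk' : ∀ m, k ≤ m → (A ^ m) v = 0 := by
    intro m hm
    have : A ^ m = A ^ (m - k) * A ^ k := by
      rw [← pow_add, Nat.sub_add_cancel hm]
    rw [this, Module.End.mul_apply, hvk, map_zero]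
  set C : ℝ := ∑ j ∈ Finset.range k, ‖(A ^ j) v‖ with hCdef
  have hC0 : 0 ≤ C := Finset.sum_nonneg fun j _ => norm_nonneg _
  have hCj : ∀ j, ‖(A ^ j) v‖ ≤ C := by
    intro j
    by_cases hj : j < k
    · exact Finset.single_le_sum (f := fun j => ‖(A ^ j) v‖)
        (fun i _ => norm_nonneg _) (Finset.mem_range.2 hj)
    · rw [hvk' j (le_of_not_gt hj)]; simpa using hC0
  refine ⟨C, fun N => ?_⟩
  have hcomm : Commute A (μ • (1 : Module.End K V)) := by
    show A * (μ • 1) = (μ • 1) * A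
    rw [mul_smul_comm, smul_mul_assoc, mul_one, one_mul]
  have hBN : B ^ N = ∑ m ∈ Finset.range (N + 1),
      A ^ m * (μ • (1 : Module.End K V)) ^ (N - m) * (N.choose m : Module.End K V) := by
    have h := hcomm.add_pow N
    rw [hA] at h ⊢
    rw [sub_add_cancel] at h
    exact h
  have hterm : ∀ m, (A ^ m * (μ • (1 : Module.End K V)) ^ (N - m)
      * (N.choose m : Module.End K V)) v
      = (μ ^ (N - m) * (N.choose m : K)) • ((A ^ m) v) := by
    intro m
    rw [Module.End.mul_apply, Module.End.mul_apply]
    have h1 : ((N.choose m : ℕ) : Module.End K V) v = ((N.choose m : ℕ) : K) • v := by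
      simp [Module.End.natCast_apply, Nat.cast_smul_eq_nsmul]
    rw [h1]
    have h2 : (μ • (1 : Module.End K V)) ^ (N - m) = μ ^ (N - m) • 1 := by
      rw [_root_.smul_pow, one_pow]
    rw [h2, LinearMap.smul_apply, Module.End.one_apply, map_smul, map_smul, smul_smul]
  rw [hBN, LinearMap.sum_apply]
  refine aux_norm_sum_le hultra _ _ hC0 ?_
  intro m _
  rw [hterm, hsmul]
  have hb : ‖μ ^ (N - m) * (N.choose m : K)‖ ≤ 1 := by
    rw [norm_mul, norm_pow]
    have := aux_norm_natCast_le_one hK (N.choose m)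
    have h1 : ‖μ‖ ^ (N - m) ≤ 1 := pow_le_one₀ (norm_nonneg _) hμ
    calc ‖μ‖ ^ (N - m) * ‖((N.choose m : ℕ) : K)‖ ≤ 1 * 1 := by
          exact mul_le_mul h1 this (norm_nonneg _) zero_le_one
      _ = 1 := by ring
  calc ‖μ ^ (N - m) * (N.choose m : K)‖ * ‖(A ^ m) v‖ ≤ 1 * ‖(A ^ m) v‖ :=
        mul_le_mul_of_nonneg_right hb (norm_nonneg _)
    _ = ‖(A ^ m) v‖ := one_mul _
    _ ≤ C := hCj m

end Aux

/-- Let `K` be a complete, nontrivially normed, nonarchimedean normed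
field and `V` a finite-dimensional `K`-vector space with a norm satisfying
`‖c • v‖ = ‖c‖ * ‖v‖` and the ultrametric inequality. Let `B : V → V` be a `K`-linear
endomorphism whose characteristic polynomial splits over `K`. Then the sequence of norms
`‖B^N v‖` is bounded if and only if `v` lies in the sum of the generalized
`λ`-eigenspaces of `B` over all `λ` with `‖λ‖ ≤ 1` (including `λ = 0`). -/
theorem iterates_bounded_iff_mem_unit_eigenvalue_generalized_eigenspaces
    (K V : Type) [NontriviallyNormedField K] [CompleteSpace K]
    (hK : IsNonarchimedean (norm : K → ℝ))
    [NormedAddCommGroup V] [Module K V] [FiniteDimensional K V]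
    (hsmul : ∀ (c : K) (v : V), ‖c • v‖ = ‖c‖ * ‖v‖)
    (hultra : ∀ v w : V, ‖v + w‖ ≤ max ‖v‖ ‖w‖)
    (B : Module.End K V)
    (hsplit : (LinearMap.charpoly B).Splits) (v : V) :
    (∃ M : ℝ, ∀ N : ℕ, ‖(B ^ N) v‖ ≤ M) ↔
      v ∈ ⨆ (μ : K) (_ : ‖μ‖ ≤ 1), ⨆ k : ℕ, LinearMap.ker ((B - μ • 1) ^ k) := by
  classical
  constructor
  · -- bounded iterates imply membership
    intro hbdd
    letI : NormedSpace K V := ⟨fun c x => (hsmul c x).le⟩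
    by_contra hvmem
    set p := LinearMap.charpoly B with hp
    have hmon : p.Monic := LinearMap.charpoly_monic B
    have haev : ∀ (μ : K) (n : ℕ),
        Polynomial.aeval B ((X - C μ) ^ n) = (B - μ • 1) ^ n := by
      intro μ n
      rw [map_pow, map_sub, aeval_X, aeval_C, Algebra.algebraMap_eq_smul_one]
    set F := p.roots.toFinset with hF
    set m : K → ℕ := fun μ => p.roots.count μ with hm
    have hfact : p = ∏ μ ∈ F, (X - C μ) ^ m μ := by
      conv_lhs => rw [hsplit.eq_prod_roots_of_monic hmon]
      exact Finset.prod_multiset_map_count _ _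
    have hcop : ∀ (μ0 : K) (G : Finset K), μ0 ∉ G →
        IsCoprime ((X - C μ0) ^ m μ0) (∏ μ ∈ G, (X - C μ) ^ m μ) := by
      intro μ0 G hG
      refine IsCoprime.pow_left (IsCoprime.prod_right fun μ hμ => IsCoprime.pow_right ?_)
      refine Polynomial.isCoprime_X_sub_C_of_isUnit_sub (isUnit_iff_ne_zero.2 ?_)
      exact sub_ne_zero_of_ne fun h => hG (h ▸ hμ)
    have hker : ∀ G : Finset K,
        LinearMap.ker (Polynomial.aeval B (∏ μ ∈ G, (X - C μ) ^ m μ))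
        ≤ ⨆ μ ∈ G, LinearMap.ker (Polynomial.aeval B ((X - C μ) ^ m μ)) := by
      intro G
      induction G using Finset.induction_on with
      | empty => simp [Module.End.one_eq_id]
      | @insert a G haG ih =>
          rw [Finset.prod_insert haG,
            ← Polynomial.sup_ker_aeval_eq_ker_aeval_mul_of_coprime _ (hcop a G haG)]
          refine sup_le ?_ (le_trans ih ?_)
          · exact le_iSup₂_of_le a (Finset.mem_insert_self a G) le_rfl
          · exact iSup₂_le fun μ hμ => le_iSup₂_of_le μ (Finset.mem_insert_of_mem hμ) le_rfl
    have hvtop : v ∈ ⨆ μ ∈ F, LinearMap.ker (Polynomial.aeval B ((X - C μ) ^ m μ)) := by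
      refine hker F ?_
      rw [← hfact, LinearMap.mem_ker, hp, LinearMap.aeval_self_charpoly]
      rfl
    rw [Submodule.mem_iSup_finset_iff_exists_sum] at hvtop
    obtain ⟨w, hwsum⟩ := hvtop
    by_cases hall : ∀ μ ∈ F, 1 < ‖μ‖ → (w μ : V) = 0
    · refine absurd ?_ hvmem
      rw [← hwsum]
      refine Submodule.sum_mem _ fun μ hμ => ?_
      by_cases h1 : ‖μ‖ ≤ 1
      · have hwk : (w μ : V) ∈ LinearMap.ker ((B - μ • 1) ^ m μ) := by
          rw [← haev]; exact (w μ).2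
        refine Submodule.mem_iSup_of_mem μ ?_
        rw [iSup_pos h1]
        exact Submodule.mem_iSup_of_mem (m μ) hwk
      · rw [hall μ hμ (lt_of_not_ge h1)]
        exact Submodule.zero_mem _
    · push_neg at hall
      obtain ⟨μ0, hμ0F, hμ0, hw0⟩ := hall
      obtain ⟨a, b, hab⟩ := hcop μ0 (F.erase μ0) (Finset.notMem_erase μ0 F)
      set π : Module.End K V :=
        Polynomial.aeval B (b * ∏ μ ∈ F.erase μ0, (X - C μ) ^ m μ) with hπ
      have hπwμ : ∀ μ ∈ F, μ ≠ μ0 → π (w μ : V) = 0 := by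
        intro μ hμ hne
        have hμe : μ ∈ F.erase μ0 := Finset.mem_erase.2 ⟨hne, hμ⟩
        have hsplit2 : b * ∏ ν ∈ F.erase μ0, (X - C ν) ^ m ν
            = (b * ∏ ν ∈ (F.erase μ0).erase μ, (X - C ν) ^ m ν) * (X - C μ) ^ m μ := by
          rw [← Finset.mul_prod_erase _ _ hμe]; ring
        rw [hπ, hsplit2, map_mul, Module.End.mul_apply,
          show Polynomial.aeval B ((X - C μ) ^ m μ) (w μ : V) = 0 from (w μ).2, map_zero]
      have hπμ0 : π (w μ0 : V) = (w μ0 : V) := by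
        have h1 : Polynomial.aeval B (a * (X - C μ0) ^ m μ0) (w μ0 : V) = 0 := by
          rw [map_mul, Module.End.mul_apply,
            show Polynomial.aeval B ((X - C μ0) ^ m μ0) (w μ0 : V) = 0 from (w μ0).2, map_zero]
        have h2 : Polynomial.aeval B
            (a * (X - C μ0) ^ m μ0 + b * ∏ μ ∈ F.erase μ0, (X - C μ) ^ m μ) (w μ0 : V)
            = (w μ0 : V) := by
          rw [hab, aeval_one, Module.End.one_apply]
        rw [map_add, LinearMap.add_apply, h1, zero_add] at h2
        rw [hπ]
        exact h2
      have hπv : π v = (w μ0 : V) := by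
        rw [← hwsum, map_sum, Finset.sum_eq_single μ0 (fun μ hμ hne => hπwμ μ hμ hne)
          (fun h => absurd hμ0F h), hπμ0]
      have hcomm : ∀ N : ℕ, π * B ^ N = B ^ N * π := by
        intro N
        have hBN : B ^ N = Polynomial.aeval B ((X : Polynomial K) ^ N) := by rw [Polynomial.aeval_X_pow]
        rw [hπ, hBN, ← map_mul, ← map_mul, mul_comm]
      set A := B - μ0 • (1 : Module.End K V) with hAdef
      have hBA : Commute B A := by
        refine (Commute.refl B).sub_right ?_
        show Commute B (μ0 • 1)
        exact (Commute.one_right B).smul_right μ0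
      have hAcomm : ∀ N j : ℕ, A ^ j * B ^ N = B ^ N * A ^ j :=
        fun N j => (hBA.symm.pow_pow j N)
      have hwker : (A ^ m μ0) (w μ0 : V) = 0 := by
        rw [hAdef, ← haev]; exact (w μ0).2
      have hex : ∃ n, (A ^ n) (w μ0 : V) = 0 := ⟨m μ0, hwker⟩
      have ht : (A ^ Nat.find hex) (w μ0 : V) = 0 := Nat.find_spec hex
      set t := Nat.find hex with htdef
      have ht0 : t ≠ 0 := by
        intro h
        rw [h, pow_zero, Module.End.one_apply] at ht
        exact hw0 ht
      set u := (A ^ (t - 1)) (w μ0 : V) with hu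
      have hune : u ≠ 0 := Nat.find_min hex (by omega)
      have hAu : A u = 0 := by
        rw [hu, ← Module.End.mul_apply, ← pow_succ']
        have h : t - 1 + 1 = t := by omega
        rw [h, ht]
      have hBuu : B u = μ0 • u := by
        have h := hAu
        rw [hAdef, LinearMap.sub_apply, sub_eq_zero] at h
        rw [h, LinearMap.smul_apply, Module.End.one_apply]
      have hBu : ∀ N, (B ^ N) u = μ0 ^ N • u := by
        intro N
        induction N with
        | zero => simp
        | succ N ih =>
            rw [pow_succ, Module.End.mul_apply, hBuu, map_smul, ih, smul_smul,
              ← pow_succ']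
      set L : Module.End K V := A ^ (t - 1) * π with hL
      have hLv : ∀ N, L ((B ^ N) v) = μ0 ^ N • u := by
        intro N
        have e1 : π ((B ^ N) v) = (B ^ N) (w μ0 : V) := by
          rw [← Module.End.mul_apply, hcomm N, Module.End.mul_apply, hπv]
        rw [hL, Module.End.mul_apply, e1, ← Module.End.mul_apply, hAcomm N (t - 1),
          Module.End.mul_apply, ← hu, hBu]
      obtain ⟨M, hM⟩ := hbdd
      have hcont : Continuous L := LinearMap.continuous_of_finiteDimensional _
      set L' : V →L[K] V := ⟨L, hcont⟩ with hL'
      have hbound : ∀ N : ℕ, ‖μ0‖ ^ N * ‖u‖ ≤ ‖L'‖ * M := by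
        intro N
        have h1 : ‖μ0 ^ N • u‖ = ‖μ0‖ ^ N * ‖u‖ := by rw [hsmul, norm_pow]
        have h2 : L' ((B ^ N) v) = μ0 ^ N • u := hLv N
        calc ‖μ0‖ ^ N * ‖u‖ = ‖L' ((B ^ N) v)‖ := by rw [h2, h1]
          _ ≤ ‖L'‖ * ‖(B ^ N) v‖ := L'.le_opNorm _
          _ ≤ ‖L'‖ * M := mul_le_mul_of_nonneg_left (hM N) (norm_nonneg _)
      have hupos : 0 < ‖u‖ := norm_pos_iff.2 hune
      obtain ⟨N, hN⟩ := pow_unbounded_of_one_lt (‖L'‖ * M / ‖u‖) hμ0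
      have hfin := hbound N
      rw [div_lt_iff₀ hupos] at hN
      linarith
  · -- membership implies bounded iterates
    intro hv
    refine Submodule.iSup_induction (motive := fun x => ∃ M : ℝ, ∀ N : ℕ, ‖(B ^ N) x‖ ≤ M)
      _ hv (fun μ x hx => ?_) ⟨0, fun N => by simp⟩ (fun x y hx hy => ?_)
    ·
        by_cases hμ : ‖μ‖ ≤ 1
        · rw [iSup_pos hμ] at hx
          have hmono : ∀ i l : ℕ, i ≤ l →
              LinearMap.ker ((B - μ • 1) ^ i) ≤ LinearMap.ker ((B - μ • 1) ^ l) := by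
            intro i l hle y hy
            simp only [LinearMap.mem_ker] at hy ⊢
            have h : (B - μ • 1) ^ l = (B - μ • 1) ^ (l - i) * (B - μ • 1) ^ i := by
              rw [← pow_add, Nat.sub_add_cancel hle]
            rw [h, Module.End.mul_apply, hy, map_zero]
          have hdir : Directed (· ≤ ·) fun k : ℕ => LinearMap.ker ((B - μ • 1) ^ k) :=
            fun i j => ⟨max i j, hmono i _ (le_max_left i j), hmono j _ (le_max_right i j)⟩
          rw [Submodule.mem_iSup_of_directed _ hdir] at hx
          obtain ⟨k, hk⟩ := hx
          exact aux_bounded_of_mem_ker hK hsmul hultra B hμ hk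
        · rw [iSup_neg hμ] at hx
          simp only [Submodule.mem_bot] at hx
          subst hx
          exact ⟨0, fun N => by simp⟩
    ·
        obtain ⟨Mx, hMx⟩ := hx
        obtain ⟨My, hMy⟩ := hy
        refine ⟨max Mx My, fun N => ?_⟩
        rw [map_add]
        exact (hultra _ _).trans (max_le_max (hMx N) (hMy N))
end

section
/- Let V be a finite-dimensional vector space over a field K and f : V → V a linear endomorphism whose characteristic polynomial splits over K. Then for every μ ∈ K, the generalized μ-eigenspace of the dual (transpose) map f* : V* → V* equals the annihilator in V* of the sum ⨆_{λ ≠ μ} (generalized λ-eigenspace of f) of all generalized eigenspaces of f for eigenvalues different from μ. -/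
open Module Polynomial Set

set_option linter.unusedSectionVars false

namespace DualGenAux

variable {K V : Type} [Field K] [AddCommGroup V] [Module K V] [FiniteDimensional K V]

/-- The sum of generalized eigenspaces over eigenvalues other than `μ`. -/
noncomputable def S (f : Module.End K V) (μ : K) : Submodule K V :=
  ⨆ (lam : K) (_ : lam ≠ μ), f.maxGenEigenspace lam

lemma commute_sub (f : Module.End K V) (μ : K) : Commute f (f - μ • 1) :=
  (Commute.refl f).sub_right ((Commute.one_right f).smul_right μ)

lemma maxGen_le_S {f : Module.End K V} {μ lam : K} (h : lam ≠ μ) :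
    f.maxGenEigenspace lam ≤ S f μ :=
  le_iSup₂ (f := fun lam (_ : lam ≠ μ) => f.maxGenEigenspace lam) lam h

lemma S_le_map (f : Module.End K V) (μ : K) :
    S f μ ≤ Submodule.map (f - μ • 1) (S f μ) := by
  refine iSup₂_le fun lam hlam => ?_
  have hmt : MapsTo ⇑(f - μ • (1 : Module.End K V)) ↑(f.maxGenEigenspace lam)
      ↑(f.maxGenEigenspace lam) :=
    Module.End.mapsTo_maxGenEigenspace_of_comm (commute_sub f μ) lam
  set g : Module.End K ↥(f.maxGenEigenspace lam) := (f - μ • 1).restrict hmt with hg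
  have hinj : Function.Injective g := by
    rw [← LinearMap.ker_eq_bot]
    refine (Submodule.eq_bot_iff _).mpr fun x hx => ?_
    have hx0 : (f - μ • 1) (x : V) = 0 := by
      have := congrArg Subtype.val (LinearMap.mem_ker.mp hx)
      exact this
    have hmem1 : (x : V) ∈ f.genEigenspace μ 1 := by
      rw [Module.End.genEigenspace_one]
      exact LinearMap.mem_ker.mpr hx0
    have hd := (f.disjoint_genEigenspace hlam ⊤ 1).mono_left le_rfl
    have : (x : V) = 0 := Submodule.disjoint_def.mp hd _ x.2 hmem1
    exact Subtype.ext this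
  have hsurj : Function.Surjective g := LinearMap.injective_iff_surjective.mp hinj
  intro x hx
  obtain ⟨y, hy⟩ := hsurj ⟨x, hx⟩
  refine Submodule.mem_map.mpr ⟨y, maxGen_le_S hlam y.2, ?_⟩
  exact congrArg Subtype.val hy

lemma map_S_le (f : Module.End K V) (μ : K) (k : ℕ) :
    Submodule.map ((f - μ • 1) ^ k) (S f μ) ≤ S f μ := by
  rw [S, Submodule.map_iSup]
  refine iSup_le fun lam => ?_
  rw [Submodule.map_iSup]
  refine iSup_le fun hlam => ?_
  refine le_trans ?_ (maxGen_le_S hlam)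
  rintro _ ⟨x, hx, rfl⟩
  exact Module.End.mapsTo_maxGenEigenspace_of_comm ((commute_sub f μ).pow_right k) lam hx

lemma S_le_map_pow (f : Module.End K V) (μ : K) (k : ℕ) :
    S f μ ≤ Submodule.map ((f - μ • 1) ^ k) (S f μ) := by
  induction k with
  | zero => intro x hx; exact ⟨x, hx, by simp⟩
  | succ k ih =>
    refine le_trans (S_le_map f μ) ?_
    refine le_trans (Submodule.map_mono ih) ?_
    rw [← Submodule.map_comp]
    rw [pow_succ']
    exact le_rfl

/-- `⨆ λ, maxGenEigenspace = maxGen a ⊔ S a`. -/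
lemma iSup_eq_sup (f : Module.End K V) (a : K) :
    (⨆ lam : K, f.maxGenEigenspace lam) = f.maxGenEigenspace a ⊔ S f a := by
  refine le_antisymm (iSup_le fun lam => ?_)
    (sup_le (le_iSup _ a) (iSup₂_le fun lam _ => le_iSup _ lam))
  by_cases h : lam = a
  · subst h; exact le_sup_left
  · exact le_trans (maxGen_le_S h) le_sup_right

lemma mem_T_of_sub_mem (f : Module.End K V) (a : K) (z : V)
    (hz : (f - a • 1) z ∈ ⨆ lam : K, f.maxGenEigenspace lam) :
    z ∈ ⨆ lam : K, f.maxGenEigenspace lam := by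
  rw [iSup_eq_sup f a] at hz ⊢
  obtain ⟨u, hu, v, hv, huv⟩ := Submodule.mem_sup.mp hz
  obtain ⟨w, hw, hwv⟩ := Submodule.mem_map.mp (S_le_map f a hv)
  have hzw : (f - a • 1) (z - w) = u := by
    rw [map_sub, hwv, ← huv]; abel
  have hzwa : z - w ∈ f.maxGenEigenspace a := by
    rw [Module.End.mem_maxGenEigenspace]
    obtain ⟨k, hk⟩ := (Module.End.mem_maxGenEigenspace f a u).mp hu
    exact ⟨k + 1, by rw [pow_succ, Module.End.mul_apply, hzw]; exact hk⟩
  have : z = (z - w) + w := by abel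
  rw [this]
  exact Submodule.mem_sup.mpr ⟨z - w, hzwa, w, hw, rfl⟩

lemma mem_T_of_aeval_prod (f : Module.End K V) (s : Multiset K) (z : V)
    (hz : (Polynomial.aeval f (s.map fun a => X - C a).prod) z ∈
      ⨆ lam : K, f.maxGenEigenspace lam) :
    z ∈ ⨆ lam : K, f.maxGenEigenspace lam := by
  induction s using Multiset.induction_on generalizing z with
  | empty => simpa using hz
  | cons a t ih =>
    rw [Multiset.map_cons, Multiset.prod_cons, map_mul, Module.End.mul_apply] at hz
    have haev : Polynomial.aeval f (X - C a) = f - a • 1 := by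
      rw [map_sub, aeval_X, aeval_C, Module.algebraMap_end_eq_smul_id]
      rfl
    rw [haev] at hz
    exact ih z (mem_T_of_sub_mem f a _ hz)

lemma iSup_maxGen_eq_top (f : Module.End K V)
    (hsplit : (LinearMap.charpoly f).Splits) :
    (⨆ lam : K, f.maxGenEigenspace lam) = ⊤ := by
  refine eq_top_iff.mpr fun z _ => ?_
  refine mem_T_of_aeval_prod f (LinearMap.charpoly f).roots z ?_
  rw [← hsplit.eq_prod_roots_of_monic (LinearMap.charpoly_monic f),
    LinearMap.aeval_self_charpoly]
  simp

lemma dual_pow_apply (f : Module.End K V) (μ : K) (k : ℕ) (ψ : Module.Dual K V) (x : V) :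
    ((LinearMap.dualMap f - μ • 1) ^ k) ψ x = ψ (((f - μ • 1) ^ k) x) := by
  induction k generalizing ψ with
  | zero => simp
  | succ k ih =>
    rw [pow_succ, Module.End.mul_apply, ih, pow_succ']
    simp [LinearMap.sub_apply, LinearMap.smul_apply, Module.End.mul_apply,
      LinearMap.dualMap_apply, map_sub, map_smul]

end DualGenAux

/-- Let `V` be a finite-dimensional vector space over a field `K` and
`f : V → V` a linear endomorphism whose characteristic polynomial splits over `K`. Then
for every `μ ∈ K`, the generalized `μ`-eigenspace of the dual (transpose) map
`f* : V* → V*` equals the annihilator in `V*` of the sum of the generalized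
`λ`-eigenspaces of `f` over all `λ ≠ μ`. -/
theorem dual_generalized_eigenspace_eq_annihilator
    (K V : Type) [Field K] [AddCommGroup V] [Module K V] [FiniteDimensional K V]
    (f : Module.End K V)
    (hsplit : (LinearMap.charpoly f).Splits) (μ : K) :
    (⨆ k : ℕ, LinearMap.ker ((LinearMap.dualMap f - μ • 1) ^ k)) =
      Submodule.dualAnnihilator
        (⨆ (lam : K) (_ : lam ≠ μ), ⨆ k : ℕ, LinearMap.ker ((f - lam • 1) ^ k)) := by
  -- rewrite kernels as generalized eigenspaces
  have h1 : (⨆ k : ℕ, LinearMap.ker ((LinearMap.dualMap f - μ • 1) ^ k)) =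
      Module.End.maxGenEigenspace (LinearMap.dualMap f : Module.End K (Module.Dual K V)) μ := by
    simp_rw [← Module.End.genEigenspace_nat, Module.End.iSup_genEigenspace_eq]
  have h2 : (⨆ (lam : K) (_ : lam ≠ μ), ⨆ k : ℕ, LinearMap.ker ((f - lam • 1) ^ k)) =
      DualGenAux.S f μ := by
    simp_rw [← Module.End.genEigenspace_nat, Module.End.iSup_genEigenspace_eq]; rfl
  rw [h1, h2]
  refine le_antisymm ?_ ?_
  · intro ψ hψ
    obtain ⟨k, hk⟩ := (Module.End.mem_maxGenEigenspace _ μ ψ).mp hψ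
    refine (Submodule.mem_dualAnnihilator ψ).mpr fun x hx => ?_
    obtain ⟨y, hy, rfl⟩ := Submodule.mem_map.mp (DualGenAux.S_le_map_pow f μ k hx)
    rw [← DualGenAux.dual_pow_apply, hk]
    rfl
  · intro ψ hψ
    rw [Submodule.mem_dualAnnihilator ψ] at hψ
    refine (Module.End.mem_maxGenEigenspace _ μ ψ).mpr ⟨Module.finrank K V, ?_⟩
    refine LinearMap.ext fun x => ?_
    rw [LinearMap.zero_apply, DualGenAux.dual_pow_apply]
    have hx : x ∈ f.maxGenEigenspace μ ⊔ DualGenAux.S f μ := by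
      rw [← DualGenAux.iSup_eq_sup, DualGenAux.iSup_maxGen_eq_top f hsplit]
      trivial
    obtain ⟨u, hu, v, hv, rfl⟩ := Submodule.mem_sup.mp hx
    rw [map_add, map_add]
    have hu0 : ((f - μ • 1) ^ Module.finrank K V) u = 0 := by
      have := (Module.End.maxGenEigenspace_eq_genEigenspace_finrank f μ) ▸ hu
      rwa [Module.End.genEigenspace_nat, LinearMap.mem_ker] at this
    have hv0 : ψ (((f - μ • 1) ^ Module.finrank K V) v) = 0 :=
      hψ _ (DualGenAux.map_S_le f μ _ (Submodule.mem_map.mpr ⟨v, hv, rfl⟩))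
    rw [hu0, hv0, map_zero, zero_add]
end

section
/- Let F be a field of characteristic zero, let m ≥ 1 and 1 ≤ k ≤ m be integers, and let t ∈ F. Let R = F[z₁^{±1}, …, z_{m+1}^{±1}] be the Laurent polynomial ring in m+1 variables (the monoid algebra of ℤ^{m+1} over F), and for 1 ≤ i ≤ m+1 let D_i : R → R be the F-linear logarithmic derivative sending the monomial z^a (a ∈ ℤ^{m+1}) to a_i · z^a. Let W = z₁ + z₂ + ⋯ + z_{m+1} + t·z₁^{−1}z₂^{−1}⋯z_m^{−1}z_{m+1}^{k}. Then the quotient of R by the ideal generated by D₁W, …, D_{m+1}W is isomorphic as an F-algebra to F[w^{±1}] ⧸ (w^{m+1−k} − (−k)^k·t), the one-variable Laurent polynomial ring modulo the single relation w^{m+1−k} = (−k)^k t. -/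
open AddMonoidAlgebra LaurentPolynomial

set_option linter.unusedSectionVars false

namespace JacAux

variable (F : Type) [Field F] {G : Type} [AddCommGroup G]

noncomputable def zUnit (a : G) : (AddMonoidAlgebra F G)ˣ where
  val := AddMonoidAlgebra.single a 1
  inv := AddMonoidAlgebra.single (-a) 1
  val_inv := by
    rw [AddMonoidAlgebra.single_mul_single]; simp [AddMonoidAlgebra.one_def]
  inv_val := by
    rw [AddMonoidAlgebra.single_mul_single]; simp [AddMonoidAlgebra.one_def]

@[simp] lemma zUnit_val (a : G) :
    (zUnit F a : AddMonoidAlgebra F G) = AddMonoidAlgebra.single a 1 := rfl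

noncomputable def zHom : Multiplicative G →* (AddMonoidAlgebra F G)ˣ where
  toFun a := zUnit F a.toAdd
  map_one' := by
    apply Units.ext
    simp only [zUnit_val]
    exact (AddMonoidAlgebra.one_def).symm
  map_mul' a b := by
    apply Units.ext
    simp only [Units.val_mul, zUnit_val, AddMonoidAlgebra.single_mul_single, one_mul]
    rfl

@[simp] lemma zHom_val (a : G) :
    ((zHom F (Multiplicative.ofAdd a) : (AddMonoidAlgebra F G)ˣ) : AddMonoidAlgebra F G)
      = AddMonoidAlgebra.single a 1 := rfl

end JacAux

namespace Jac

noncomputable section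

variable (F : Type) [Field F] [CharZero F] (m k : ℕ) (t : F)

def bv : Fin (m + 1) → ℤ := fun j => if j = Fin.last m then (k : ℤ) else -1

def ev (j : Fin (m + 1)) : Fin (m + 1) → ℤ := Pi.single j 1

abbrev R := AddMonoidAlgebra F (Fin (m + 1) → ℤ)

def gen (j : Fin (m + 1)) : R F m :=
  AddMonoidAlgebra.single (ev m j) (1 : F)
    + (bv m k j) • AddMonoidAlgebra.single (bv m k) t

abbrev J : Ideal (R F m) := Ideal.span (Set.range (gen F m k t))

abbrev Q := R F m ⧸ J F m k t

def mkQ : R F m →ₐ[F] Q F m k t := Ideal.Quotient.mkₐ F _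

def Z : Multiplicative (Fin (m + 1) → ℤ) →* (Q F m k t)ˣ :=
  (Units.map ((mkQ F m k t : R F m →+* Q F m k t) : R F m →* Q F m k t)).comp (JacAux.zHom F)

lemma Z_val (a : Fin (m + 1) → ℤ) :
    ((Z F m k t (Multiplicative.ofAdd a) : (Q F m k t)ˣ) : Q F m k t)
      = mkQ F m k t (AddMonoidAlgebra.single a 1) := rfl

def Bu : (Q F m k t)ˣ := Z F m k t (Multiplicative.ofAdd (bv m k))
def Uu : (Q F m k t)ˣ := Z F m k t (Multiplicative.ofAdd (ev m 0))
def Vu : (Q F m k t)ˣ := Z F m k t (Multiplicative.ofAdd (ev m (Fin.last m)))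

lemma zero_ne_last (hm : 1 ≤ m) : (0 : Fin (m + 1)) ≠ Fin.last m := by
  intro h
  have := congrArg Fin.val h
  simp [Fin.last] at this
  omega

lemma rel (j : Fin (m + 1)) : mkQ F m k t (gen F m k t j) = 0 := by
  rw [mkQ, Ideal.Quotient.mkₐ_eq_mk, Ideal.Quotient.eq_zero_iff_mem]
  exact Ideal.subset_span ⟨j, rfl⟩

lemma single_bt : mkQ F m k t (AddMonoidAlgebra.single (bv m k) t)
    = algebraMap F (Q F m k t) t * ((Bu F m k t : (Q F m k t)ˣ) : Q F m k t) := by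
  rw [Bu, Z_val, ← Algebra.smul_def, ← map_smul, AddMonoidAlgebra.smul_single', mul_one]

lemma h_e {j : Fin (m + 1)} (hj : j ≠ Fin.last m) :
    ((Z F m k t (Multiplicative.ofAdd (ev m j)) : (Q F m k t)ˣ) : Q F m k t)
      = algebraMap F (Q F m k t) t * ((Bu F m k t : (Q F m k t)ˣ) : Q F m k t) := by
  have h := rel F m k t j
  rw [gen, map_add, map_zsmul, single_bt] at h
  rw [bv] at h
  simp only [if_neg hj] at h
  rw [neg_one_zsmul, ← sub_eq_add_neg, sub_eq_zero] at h
  rw [Z_val]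
  exact h

lemma h_last :
    ((Vu F m k t : (Q F m k t)ˣ) : Q F m k t)
      = algebraMap F (Q F m k t) (-(k : F))
        * (algebraMap F (Q F m k t) t * ((Bu F m k t : (Q F m k t)ˣ) : Q F m k t)) := by
  have h := rel F m k t (Fin.last m)
  rw [gen, map_add, map_zsmul, single_bt] at h
  rw [bv] at h
  simp only [if_pos rfl] at h
  have h2 := eq_neg_of_add_eq_zero_left h
  rw [Vu, Z_val, h2, zsmul_eq_mul, ← neg_mul]
  congr 1
  push_cast
  simp

lemma kne (hk1 : 1 ≤ k) : (-(k : F)) ≠ 0 := by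
  simp only [ne_eq, neg_eq_zero, Nat.cast_eq_zero]
  omega

def κF (hk1 : 1 ≤ k) : Fˣ := Units.mk0 (-(k : F)) (kne F k hk1)

def τu : (Q F m k t)ˣ := Uu F m k t * (Bu F m k t)⁻¹

def κu (hk1 : 1 ≤ k) : (Q F m k t)ˣ :=
  Units.map (algebraMap F (Q F m k t)).toMonoidHom (κF F k hk1)

lemma κu_val (hk1 : 1 ≤ k) :
    ((κu F m k t hk1 : (Q F m k t)ˣ) : Q F m k t) = algebraMap F (Q F m k t) (-(k : F)) := rfl

lemma τu_val (hm : 1 ≤ m) :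
    ((τu F m k t : (Q F m k t)ˣ) : Q F m k t) = algebraMap F (Q F m k t) t := by
  rw [τu, Units.val_mul]
  rw [show ((Uu F m k t : (Q F m k t)ˣ) : Q F m k t)
      = algebraMap F (Q F m k t) t * ((Bu F m k t : (Q F m k t)ˣ) : Q F m k t) from
    h_e F m k t (zero_ne_last m hm)]
  rw [mul_assoc, Units.mul_inv, mul_one]

lemma Ueq : Uu F m k t = τu F m k t * Bu F m k t := by
  rw [τu, inv_mul_cancel_right]

lemma Veq (hm : 1 ≤ m) (hk1 : 1 ≤ k) :
    Vu F m k t = κu F m k t hk1 * τu F m k t * Bu F m k t := by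
  apply Units.ext
  rw [Units.val_mul, Units.val_mul, h_last, κu_val, τu_val F m k t hm, mul_assoc]

lemma Ze_eq (hm : 1 ≤ m) {j : Fin (m + 1)} (hj : j ≠ Fin.last m) :
    Z F m k t (Multiplicative.ofAdd (ev m j)) = Uu F m k t := by
  apply Units.ext
  rw [h_e F m k t hj, Uu]
  exact (h_e F m k t (zero_ne_last m hm)).symm

lemma sum_ev_add_bv :
    bv m k + (∑ j, ev m j) = (k + 1) • ev m (Fin.last m) := by
  have hsum : (∑ j, ev m j) = fun _ => (1 : ℤ) := by
    have := Finset.univ_sum_single (fun _ => (1 : ℤ) : Fin (m + 1) → ℤ)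
    simpa [ev] using this
  funext j
  rcases eq_or_ne j (Fin.last m) with h | h
  · subst h
    simp [hsum, bv, ev, Pi.single_apply]
  · simp [hsum, bv, ev, Pi.single_apply, h, Pi.add_apply]

lemma hBU (hm : 1 ≤ m) (hk1 : 1 ≤ k) :
    Bu F m k t * Uu F m k t ^ m = Vu F m k t ^ k := by
  have h := congrArg (fun a => Z F m k t (Multiplicative.ofAdd a)) (sum_ev_add_bv m k)
  simp only [ofAdd_add, ofAdd_nsmul, map_mul, map_pow] at h
  rw [ofAdd_sum, map_prod] at h
  rw [Fin.prod_univ_castSucc] at h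
  have hc : ∀ i : Fin m, Z F m k t (Multiplicative.ofAdd (ev m i.castSucc)) = Uu F m k t :=
    fun i => Ze_eq F m k t hm (Fin.castSucc_lt_last i).ne
  simp only [hc, Finset.prod_const, Finset.card_univ, Fintype.card_fin] at h
  have h' : Bu F m k t * (Uu F m k t ^ m * Vu F m k t) = Vu F m k t ^ k * Vu F m k t := by
    rw [← pow_succ]
    exact h
  rw [← mul_assoc] at h'
  exact mul_right_cancel h'

lemma key (hm : 1 ≤ m) (hk1 : 1 ≤ k) (d : ℕ) (hd : m = k + d) :
    Uu F m k t ^ (d + 1) = κu F m k t hk1 ^ k * τu F m k t := by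
  subst hd
  apply Units.ext
  have hBUel := congrArg (Units.val) (hBU F (k + d) k t hm hk1)
  simp only [Units.val_mul, Units.val_pow_eq_pow_val] at hBUel
  have hUel : ((Uu F (k + d) k t : _ˣ) : Q F (k + d) k t)
      = algebraMap F (Q F (k + d) k t) t * ((Bu F (k + d) k t : _ˣ) : Q F (k + d) k t) :=
    h_e F (k + d) k t (zero_ne_last (k + d) hm)
  have hVel := h_last F (k + d) k t
  rw [hUel, hVel] at hBUel
  rw [Units.val_pow_eq_pow_val, Units.val_mul, Units.val_pow_eq_pow_val, κu_val,
    τu_val F (k + d) k t hm, hUel]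
  have hcancel : IsUnit (((τu F (k + d) k t ^ (k + d) * Bu F (k + d) k t ^ k : _ˣ) : Q F (k + d) k t)) :=
    Units.isUnit _
  apply hcancel.mul_right_cancel
  simp only [Units.val_mul, Units.val_pow_eq_pow_val, τu_val F (k + d) k t hm, κu_val, hUel]
  linear_combination (algebraMap F (Q F (k + d) k t) t) ^ (d + 1) * hBUel

/-! ### The target ring -/

def cF : F := (-(k : F)) ^ k * t

def pL : LaurentPolynomial F := T ((m : ℤ) + 1 - k) - C (cF F k t)

abbrev L' := LaurentPolynomial F ⧸ Ideal.span {pL F m k t}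

def mkL : LaurentPolynomial F →ₐ[F] L' F m k t := Ideal.Quotient.mkₐ F _

def ωL : (LaurentPolynomial F)ˣ where
  val := T 1
  inv := T (-1)
  val_inv := by rw [← T_add]; norm_num
  inv_val := by rw [← T_add]; norm_num

lemma ωL_zpow (n : ℤ) :
    ((ωL F ^ n : (LaurentPolynomial F)ˣ) : LaurentPolynomial F) = T n := by
  rcases n with n | n
  · rw [Int.ofNat_eq_natCast, zpow_natCast, Units.val_pow_eq_pow_val]
    show (T 1 : LaurentPolynomial F) ^ n = _
    rw [T_pow]
    norm_num
  · rw [zpow_negSucc, ← inv_pow, Units.val_pow_eq_pow_val]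
    show (T (-1) : LaurentPolynomial F) ^ (n + 1) = _
    rw [T_pow]
    congr 1
    simp [Int.negSucc_eq]

def ωu : (L' F m k t)ˣ :=
  Units.map ((mkL F m k t : LaurentPolynomial F →+* L' F m k t) : _ →* _) (ωL F)

lemma ωu_zpow (n : ℤ) :
    ((ωu F m k t ^ n : (L' F m k t)ˣ) : L' F m k t) = mkL F m k t (T n) := by
  rw [ωu, ← map_zpow, Units.coe_map]
  show mkL F m k t _ = _
  rw [ωL_zpow]

lemma C_eq_algebraMap' (r : F) : (C r : LaurentPolynomial F) = algebraMap F _ r := rfl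

lemma T_rel (d : ℕ) (hd : m = k + d) :
    ((ωu F m k t ^ (d + 1) : (L' F m k t)ˣ) : L' F m k t)
      = algebraMap F (L' F m k t) (cF F k t) := by
  have h0 : mkL F m k t (T ((m : ℤ) + 1 - k) - C (cF F k t)) = 0 := by
    rw [mkL, Ideal.Quotient.mkₐ_eq_mk, Ideal.Quotient.eq_zero_iff_mem]
    exact Ideal.subset_span rfl
  rw [map_sub, sub_eq_zero, C_eq_algebraMap', AlgHom.commutes] at h0
  have hexp : ((m : ℤ) + 1 - k) = ((d + 1 : ℕ) : ℤ) := by subst hd; push_cast; ring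
  rw [← zpow_natCast, ωu_zpow, ← hexp]
  exact h0

def κ'u (hk1 : 1 ≤ k) : (L' F m k t)ˣ :=
  Units.map (algebraMap F (L' F m k t)).toMonoidHom (κF F k hk1)

lemma κ'u_val (hk1 : 1 ≤ k) :
    ((κ'u F m k t hk1 : (L' F m k t)ˣ) : L' F m k t)
      = algebraMap F (L' F m k t) (-(k : F)) := rfl

def fHom (hk1 : 1 ≤ k) : Multiplicative (Fin (m + 1) → ℤ) →* (L' F m k t)ˣ where
  toFun a := κ'u F m k t hk1 ^ (a.toAdd (Fin.last m)) * ωu F m k t ^ (∑ i, a.toAdd i)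
  map_one' := by
    simp only [toAdd_one, Pi.zero_apply, zpow_zero, Finset.sum_const_zero, one_mul]
  map_mul' a b := by
    simp only [toAdd_mul, Pi.add_apply, Finset.sum_add_distrib, zpow_add]
    exact mul_mul_mul_comm (κ'u F m k t hk1 ^ a.toAdd (Fin.last m))
      (κ'u F m k t hk1 ^ b.toAdd (Fin.last m)) (ωu F m k t ^ ∑ i, a.toAdd i)
      (ωu F m k t ^ ∑ i, b.toAdd i)

def φ0 (hk1 : 1 ≤ k) : R F m →ₐ[F] L' F m k t :=
  AddMonoidAlgebra.lift F _ _ ((Units.coeHom _).comp (fHom F m k t hk1))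

lemma φ0_single (hk1 : 1 ≤ k) (a : Fin (m + 1) → ℤ) (r : F) :
    φ0 F m k t hk1 (AddMonoidAlgebra.single a r)
      = algebraMap F (L' F m k t) r * ((κ'u F m k t hk1 ^ (a (Fin.last m)) * ωu F m k t ^ (∑ i, a i)
          : (L' F m k t)ˣ) : L' F m k t) := by
  rw [φ0, AddMonoidAlgebra.lift_single, Algebra.smul_def]
  rfl

lemma sum_bv : ∑ i, bv m k i = (k : ℤ) - m := by
  rw [Fin.sum_univ_castSucc]
  have h1 : ∀ i : Fin m, bv m k i.castSucc = -1 := by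
    intro i
    rw [bv]
    simp [(Fin.castSucc_lt_last i).ne]
  have h2 : bv m k (Fin.last m) = (k : ℤ) := by rw [bv]; simp
  simp only [h1, h2, Finset.sum_const, Finset.card_univ, Fintype.card_fin, smul_eq_mul]
  ring

lemma sum_ev (j : Fin (m + 1)) : ∑ i, ev m j i = 1 := by
  simp [ev, Pi.single_apply]

lemma fb_val (hm : 1 ≤ m) (hk1 : 1 ≤ k) (d : ℕ) (hd : m = k + d) :
    algebraMap F (L' F m k t) t * ((κ'u F m k t hk1 ^ (bv m k (Fin.last m))
        * ωu F m k t ^ (∑ i, bv m k i)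
        : (L' F m k t)ˣ) : L' F m k t) = ((ωu F m k t : (L' F m k t)ˣ) : L' F m k t) := by
  have hbl : bv m k (Fin.last m) = (k : ℤ) := by rw [bv]; simp
  rw [hbl, sum_bv, Units.val_mul, ← mul_assoc]
  rw [zpow_natCast, Units.val_pow_eq_pow_val, κ'u_val, ← map_pow, ← map_mul]
  have : t * (-(k : F)) ^ k = cF F k t := by rw [cF]; ring
  rw [this, ← T_rel F m k t d hd, ← Units.val_mul, ← zpow_natCast (ωu F m k t) (d + 1),
    ← zpow_add]
  have he : ((d + 1 : ℕ) : ℤ) + ((k : ℤ) - (m : ℤ)) = 1 := by subst hd; push_cast; ring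
  rw [he, zpow_one]

lemma φ0_gen (hm : 1 ≤ m) (hk1 : 1 ≤ k) (d : ℕ) (hd : m = k + d) (j : Fin (m + 1)) :
    φ0 F m k t hk1 (gen F m k t j) = 0 := by
  rw [gen, map_add, map_zsmul, φ0_single, φ0_single, map_one, one_mul]
  rcases eq_or_ne j (Fin.last m) with h | h
  · subst h
    have h1 : ev m (Fin.last m) (Fin.last m) = 1 := by rw [ev]; simp
    have h2 : bv m k (Fin.last m) = (k : ℤ) := by rw [bv]; simp
    rw [fb_val F m k t hm hk1 d hd, h1, h2, sum_ev, zpow_one, zpow_one, Units.val_mul, κ'u_val]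
    rw [zsmul_eq_mul]
    have hcast : ((k : ℤ) : L' F m k t) = algebraMap F (L' F m k t) (k : F) := by
      simp
    rw [hcast, map_neg]
    ring
  · have h1 : ev m j (Fin.last m) = 0 := by
      rw [ev, Pi.single_apply]
      simp [Ne.symm h]
    have h2 : bv m k j = -1 := by rw [bv]; simp [h]
    rw [fb_val F m k t hm hk1 d hd, h1, h2, sum_ev, zpow_zero, zpow_one, one_mul]
    simp

def φA (hm : 1 ≤ m) (hk1 : 1 ≤ k) (d : ℕ) (hd : m = k + d) :
    Q F m k t →ₐ[F] L' F m k t :=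
  Ideal.Quotient.liftₐ _ (φ0 F m k t hk1) (by
    intro a ha
    have hle : J F m k t ≤ RingHom.ker (φ0 F m k t hk1).toRingHom := by
      rw [Ideal.span_le]
      rintro x ⟨j, rfl⟩
      simp only [SetLike.mem_coe, RingHom.mem_ker]
      exact φ0_gen F m k t hm hk1 d hd j
    exact hle ha)

lemma φA_mk (hm : 1 ≤ m) (hk1 : 1 ≤ k) (d : ℕ) (hd : m = k + d) (x : R F m) :
    φA F m k t hm hk1 d hd (mkQ F m k t x) = φ0 F m k t hk1 x := by
  rw [φA, mkQ]
  rfl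

def ψ0 : LaurentPolynomial F →ₐ[F] Q F m k t :=
  AddMonoidAlgebra.lift F _ ℤ ((Units.coeHom _).comp (zpowersHom (Q F m k t)ˣ (Uu F m k t)))

lemma ψ0_single (n : ℤ) (r : F) :
    ψ0 F m k t (AddMonoidAlgebra.single n r)
      = algebraMap F (Q F m k t) r
        * ((Uu F m k t ^ n : (Q F m k t)ˣ) : Q F m k t) := by
  rw [ψ0, AddMonoidAlgebra.lift_single, Algebra.smul_def]
  rfl

lemma T_single (n : ℤ) : (T n : LaurentPolynomial F) = AddMonoidAlgebra.single n (1 : F) := rfl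

lemma C_single (r : F) : (C r : LaurentPolynomial F) = AddMonoidAlgebra.single (0 : ℤ) r := rfl

lemma ψ0_pL (hm : 1 ≤ m) (hk1 : 1 ≤ k) (d : ℕ) (hd : m = k + d) :
    ψ0 F m k t (pL F m k t) = 0 := by
  rw [show pL F m k t = T ((m : ℤ) + 1 - k) - C (cF F k t) from rfl, map_sub, T_single, C_single,
    ψ0_single, ψ0_single, map_one, one_mul, zpow_zero, Units.val_one, mul_one]
  have hexp : ((m : ℤ) + 1 - k) = ((d + 1 : ℕ) : ℤ) := by subst hd; push_cast; ring
  rw [hexp, zpow_natCast, key F m k t hm hk1 d hd, Units.val_mul, Units.val_pow_eq_pow_val,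
    κu_val, ← map_pow, τu_val F m k t hm, ← map_mul]
  rw [show (-(k : F)) ^ k * t = cF F k t from rfl]
  exact sub_self _

def ψA (hm : 1 ≤ m) (hk1 : 1 ≤ k) (d : ℕ) (hd : m = k + d) :
    L' F m k t →ₐ[F] Q F m k t :=
  Ideal.Quotient.liftₐ _ (ψ0 F m k t) (by
    intro a ha
    have hle : Ideal.span {pL F m k t} ≤ RingHom.ker (ψ0 F m k t).toRingHom := by
      rw [Ideal.span_le]
      rintro x hx
      rw [Set.mem_singleton_iff] at hx
      subst hx
      simp only [SetLike.mem_coe, RingHom.mem_ker]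
      exact ψ0_pL F m k t hm hk1 d hd
    exact hle ha)

lemma ψA_mk (hm : 1 ≤ m) (hk1 : 1 ≤ k) (d : ℕ) (hd : m = k + d) (x : LaurentPolynomial F) :
    ψA F m k t hm hk1 d hd (mkL F m k t x) = ψ0 F m k t x := by
  rw [ψA, mkL]
  rfl

lemma ev0_last (hm : 1 ≤ m) : ev m 0 (Fin.last m) = 0 := by
  rw [ev, Pi.single_apply]
  simp [(zero_ne_last m hm).symm]

lemma mapU (hm : 1 ≤ m) (hk1 : 1 ≤ k) (d : ℕ) (hd : m = k + d) :
    Units.map ((φA F m k t hm hk1 d hd : Q F m k t →+* L' F m k t) : Q F m k t →* L' F m k t)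
      (Uu F m k t) = ωu F m k t := by
  apply Units.ext
  rw [Units.coe_map]
  show φA F m k t hm hk1 d hd ((Uu F m k t : (Q F m k t)ˣ) : Q F m k t) = _
  rw [show ((Uu F m k t : (Q F m k t)ˣ) : Q F m k t)
      = mkQ F m k t (AddMonoidAlgebra.single (ev m 0) 1) from rfl]
  rw [φA_mk, φ0_single, map_one, one_mul, ev0_last m hm, sum_ev, zpow_zero, zpow_one, one_mul]

lemma mapOmega (hm : 1 ≤ m) (hk1 : 1 ≤ k) (d : ℕ) (hd : m = k + d) :
    Units.map ((ψA F m k t hm hk1 d hd : L' F m k t →+* Q F m k t) : L' F m k t →* Q F m k t)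
      (ωu F m k t) = Uu F m k t := by
  apply Units.ext
  rw [Units.coe_map]
  show ψA F m k t hm hk1 d hd (mkL F m k t (T 1)) = _
  rw [ψA_mk, T_single, ψ0_single, map_one, one_mul, zpow_one]

lemma mapKappa (hm : 1 ≤ m) (hk1 : 1 ≤ k) (d : ℕ) (hd : m = k + d) :
    Units.map ((ψA F m k t hm hk1 d hd : L' F m k t →+* Q F m k t) : L' F m k t →* Q F m k t)
      (κ'u F m k t hk1) = κu F m k t hk1 := by
  apply Units.ext
  rw [Units.coe_map]
  show ψA F m k t hm hk1 d hd (algebraMap F (L' F m k t) (-(k : F))) = _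
  rw [AlgHom.commutes]
  rfl

lemma Vu_eq_kU (hm : 1 ≤ m) (hk1 : 1 ≤ k) :
    Vu F m k t = κu F m k t hk1 * Uu F m k t := by
  rw [Veq F m k t hm hk1, mul_assoc, ← Ueq]

lemma Z_decomp (hm : 1 ≤ m) (hk1 : 1 ≤ k) (a : Fin (m + 1) → ℤ) :
    Z F m k t (Multiplicative.ofAdd a)
      = κu F m k t hk1 ^ (a (Fin.last m)) * Uu F m k t ^ (∑ i, a i) := by
  have ha : a = ∑ j, (a j) • ev m j := by
    have h1 : ∀ j : Fin (m + 1), (a j) • ev m j = Pi.single j (a j) := by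
      intro j
      rw [ev, ← Pi.single_smul, smul_eq_mul, mul_one]
    simp only [h1]
    exact (Finset.univ_sum_single a).symm
  have hprod : Z F m k t (Multiplicative.ofAdd a)
      = ∏ j, Z F m k t (Multiplicative.ofAdd (ev m j)) ^ (a j) := by
    conv_lhs => rw [ha]
    rw [ofAdd_sum, map_prod]
    exact Finset.prod_congr rfl fun j _ => by rw [ofAdd_zsmul, map_zpow]
  rw [hprod, Fin.prod_univ_castSucc]
  have hc : ∀ i : Fin m,
      Z F m k t (Multiplicative.ofAdd (ev m i.castSucc)) ^ (a i.castSucc)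
        = Uu F m k t ^ (a i.castSucc) := fun i => by
    rw [Ze_eq F m k t hm (Fin.castSucc_lt_last i).ne]
  simp only [hc]
  have hZl : Z F m k t (Multiplicative.ofAdd (ev m (Fin.last m))) = Vu F m k t := rfl
  rw [hZl, Vu_eq_kU F m k t hm hk1,
    mul_zpow (κu F m k t hk1) (Uu F m k t) (a (Fin.last m))]
  have hppow : ∏ i : Fin m, Uu F m k t ^ (a i.castSucc)
      = Uu F m k t ^ (∑ i : Fin m, a i.castSucc) := by
    have h2 := map_prod (zpowersHom (Q F m k t)ˣ (Uu F m k t))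
      (fun i : Fin m => Multiplicative.ofAdd (a i.castSucc)) Finset.univ
    rw [← ofAdd_sum] at h2
    exact h2.symm
  rw [hppow, Fin.sum_univ_castSucc]
  rw [zpow_add, mul_comm (Uu F m k t ^ (∑ i : Fin m, a i.castSucc)), mul_assoc]
  congr 1
  exact mul_comm (G := (Q F m k t)ˣ) _ _

lemma comp1 (hm : 1 ≤ m) (hk1 : 1 ≤ k) (d : ℕ) (hd : m = k + d) :
    (φA F m k t hm hk1 d hd).comp (ψA F m k t hm hk1 d hd) = AlgHom.id F (L' F m k t) := by
  apply Ideal.Quotient.algHom_ext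
  refine AddMonoidAlgebra.algHom_ext ?_ (Subsingleton.elim _ _)
  intro n
  simp only [AlgHom.comp_apply, AlgHom.id_apply]
  rw [show (Ideal.Quotient.mkₐ F (Ideal.span {pL F m k t})) (AddMonoidAlgebra.single n (1 : F))
      = mkL F m k t (AddMonoidAlgebra.single n 1) from rfl]
  rw [ψA_mk, ψ0_single, map_one, one_mul]
  calc φA F m k t hm hk1 d hd ((Uu F m k t ^ n : (Q F m k t)ˣ) : Q F m k t)
      = ((Units.map ((φA F m k t hm hk1 d hd : Q F m k t →+* L' F m k t) :
          Q F m k t →* L' F m k t) (Uu F m k t ^ n) : (L' F m k t)ˣ) : L' F m k t) :=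
        (Units.coe_map _ _).symm
    _ = ((Units.map ((φA F m k t hm hk1 d hd : Q F m k t →+* L' F m k t) :
          Q F m k t →* L' F m k t) (Uu F m k t) ^ n : (L' F m k t)ˣ) : L' F m k t) := by
        rw [map_zpow]
    _ = ((ωu F m k t ^ n : (L' F m k t)ˣ) : L' F m k t) := by
        rw [mapU F m k t hm hk1 d hd]
    _ = mkL F m k t (T n) := ωu_zpow F m k t n
    _ = mkL F m k t (AddMonoidAlgebra.single n 1) := rfl

lemma comp2 (hm : 1 ≤ m) (hk1 : 1 ≤ k) (d : ℕ) (hd : m = k + d) :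
    (ψA F m k t hm hk1 d hd).comp (φA F m k t hm hk1 d hd) = AlgHom.id F (Q F m k t) := by
  apply Ideal.Quotient.algHom_ext
  refine AddMonoidAlgebra.algHom_ext ?_ (Subsingleton.elim _ _)
  intro a
  simp only [AlgHom.comp_apply, AlgHom.id_apply]
  rw [show (Ideal.Quotient.mkₐ F (J F m k t)) (AddMonoidAlgebra.single a (1 : F))
      = mkQ F m k t (AddMonoidAlgebra.single a 1) from rfl]
  rw [φA_mk, φ0_single, map_one, one_mul]
  calc ψA F m k t hm hk1 d hd ((κ'u F m k t hk1 ^ (a (Fin.last m)) * ωu F m k t ^ (∑ i, a i)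
        : (L' F m k t)ˣ) : L' F m k t)
      = ((Units.map ((ψA F m k t hm hk1 d hd : L' F m k t →+* Q F m k t) :
          L' F m k t →* Q F m k t) (κ'u F m k t hk1 ^ (a (Fin.last m)) * ωu F m k t ^ (∑ i, a i))
          : (Q F m k t)ˣ) : Q F m k t) := (Units.coe_map _ _).symm
    _ = ((Units.map ((ψA F m k t hm hk1 d hd : L' F m k t →+* Q F m k t) :
          L' F m k t →* Q F m k t) (κ'u F m k t hk1) ^ (a (Fin.last m))
          * Units.map ((ψA F m k t hm hk1 d hd : L' F m k t →+* Q F m k t) :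
          L' F m k t →* Q F m k t) (ωu F m k t) ^ (∑ i, a i)
          : (Q F m k t)ˣ) : Q F m k t) := by rw [map_mul, map_zpow, map_zpow]
    _ = ((κu F m k t hk1 ^ (a (Fin.last m)) * Uu F m k t ^ (∑ i, a i)
          : (Q F m k t)ˣ) : Q F m k t) := by
        rw [mapKappa F m k t hm hk1 d hd, mapOmega F m k t hm hk1 d hd]
    _ = ((Z F m k t (Multiplicative.ofAdd a) : (Q F m k t)ˣ) : Q F m k t) := by
        rw [← Z_decomp F m k t hm hk1 a]
    _ = mkQ F m k t (AddMonoidAlgebra.single a 1) := rfl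

lemma main (hm : 1 ≤ m) (hk1 : 1 ≤ k) (hk2 : k ≤ m) :
    Nonempty (Q F m k t ≃ₐ[F] L' F m k t) := by
  obtain ⟨d, hd⟩ : ∃ d, m = k + d := ⟨m - k, by omega⟩
  exact ⟨AlgEquiv.ofAlgHom (φA F m k t hm hk1 d hd) (ψA F m k t hm hk1 d hd)
    (comp1 F m k t hm hk1 d hd) (comp2 F m k t hm hk1 d hd)⟩

end

end Jac



/-- Let `F` be a field of characteristic zero, `1 ≤ k ≤ m`, `t ∈ F`.
Let `R = F[z₁^±1, …, z_{m+1}^±1]` be the Laurent polynomial ring in `m+1` variables (the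
monoid algebra of `ℤ^{m+1}` over `F`), and `D i` the `F`-linear logarithmic derivative
sending a monomial `z^a` to `a i • z^a`. Let
`W = z₁ + ⋯ + z_{m+1} + t·z₁⁻¹⋯z_m⁻¹ z_{m+1}^k`. Then the quotient of `R` by the ideal
generated by `D₁ W, …, D_{m+1} W` is isomorphic as an `F`-algebra to
`F[w^±1] ⧸ (w^{m+1-k} - (-k)^k·t)`. -/
theorem jacobian_ring_of_superpotential
    (F : Type) [Field F] [CharZero F] (m k : ℕ) (hm : 1 ≤ m) (hk1 : 1 ≤ k) (hk2 : k ≤ m)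
    (t : F)
    (D : Fin (m + 1) →
      (AddMonoidAlgebra F (Fin (m + 1) → ℤ) →ₗ[F] AddMonoidAlgebra F (Fin (m + 1) → ℤ)))
    (hD : ∀ (i : Fin (m + 1)) (a : Fin (m + 1) → ℤ),
      D i (AddMonoidAlgebra.single a 1) = (a i) • AddMonoidAlgebra.single a 1)
    (W : AddMonoidAlgebra F (Fin (m + 1) → ℤ))
    (hW : W = (∑ i : Fin (m + 1), AddMonoidAlgebra.single (Pi.single i 1) (1 : F))
        + AddMonoidAlgebra.single (fun j => if j = Fin.last m then (k : ℤ) else -1) t) :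
    Nonempty
      ((AddMonoidAlgebra F (Fin (m + 1) → ℤ) ⧸ Ideal.span (Set.range fun i => D i W)) ≃ₐ[F]
        (LaurentPolynomial F ⧸ Ideal.span
          {LaurentPolynomial.T ((m : ℤ) + 1 - k) - LaurentPolynomial.C ((-(k : F)) ^ k * t)})) := by
  have hbv : (fun j => if j = Fin.last m then (k : ℤ) else -1) = Jac.bv m k := rfl
  have hDW : ∀ j, D j W = Jac.gen F m k t j := by
    intro j
    rw [hW, map_add, map_sum]
    simp only [hD j]
    rw [Finset.sum_eq_single j
      (fun i _ hij => by rw [Pi.single_eq_of_ne (Ne.symm hij), zero_smul])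
      (fun h => absurd (Finset.mem_univ j) h), Pi.single_eq_same, one_smul]
    have h3 : (AddMonoidAlgebra.single (Jac.bv m k) t : Jac.R F m)
        = t • AddMonoidAlgebra.single (Jac.bv m k) (1 : F) := by
      rw [AddMonoidAlgebra.smul_single', mul_one]
    rw [hbv, h3, map_smul, hD j (Jac.bv m k), smul_comm, ← h3]
    rfl
  have hset : (Set.range fun i => D i W) = Set.range (Jac.gen F m k t) :=
    congrArg Set.range (funext hDW)
  rw [hset]
  exact Jac.main F m k t hm hk1 hk2
end
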